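/- arXiv:2207.08853 — 9 statements merged into one kernel-verified Lean document; each statement's English description precedes it below -/
import Mathlib

section
/- Let n ≥ 2 and let A ∈ ℝ^{n×n} be symmetric nonnegative definite. Then the Kruskal rank of A is at least 2 (i.e., every column of A is nonzero and any two distinct columns of A are linearly independent) if and only if for every integer d ≥ n−1 the d-th Hadamard power A^∘d is positive definite. -/
/-!
Write `A = V Vᵀ` with rows `vᵢ`. Then `A^∘d` is the Gram matrix of the tensor powers `vᵢ^⊗d`, so
it is positive definite iff these are linearly independent. Pairing a relation `∑ xᵢ vᵢ^⊗d = 0`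
with `y^⊗d` gives `∑ xᵢ (vᵢ ⬝ y)^d = 0` for all `y`. On a generic line `y = t z + u` this reads
`∑ xᵢ' (t + aᵢ)^d = 0` with distinct `aᵢ` (distinct because the `vᵢ` are pairwise independent),
and comparing coefficients gives a Vandermonde system of size `n ≤ d + 1`, so `x = 0`. Conversely,
a zero column or two dependent columns of `A` stay so in `A^∘d`.
-/

open Matrix

theorem Module.Dual.exists_forall_apply_ne_zero {K E ι : Type*} [Field K] [Infinite K]
    [AddCommGroup E] [Module K E] [Finite ι] {f : ι → Module.Dual K E} (hf : ∀ k, f k ≠ 0) :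
    ∃ u, ∀ k, f k u ≠ 0 := by
  by_contra! h
  have hcover : ⋃ k, ((LinearMap.ker (f k) : Subspace K E) : Set E) = Set.univ :=
    Set.eq_univ_of_forall fun u => Set.mem_iUnion.mpr (h u)
  obtain ⟨k, hk⟩ := Subspace.exists_eq_top_of_iUnion_eq_univ hcover
  exact hf k (LinearMap.ker_eq_top.mp hk)

theorem exists_forall_dotProduct_ne_zero {K m ι : Type*} [Field K] [Infinite K] [Fintype m]
    [Finite ι] {c : ι → m → K} (hc : ∀ k, c k ≠ 0) : ∃ u, ∀ k, c k ⬝ᵥ u ≠ 0 := by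
  classical
  exact Module.Dual.exists_forall_apply_ne_zero fun k =>
    (dotProductEquiv K m).map_ne_zero_iff.mpr (hc k)

open Polynomial in
theorem eq_zero_of_forall_sum_mul_add_pow_eq_zero {K : Type*} [Field K] [CharZero K] {n d : ℕ}
    (hnd : n ≤ d + 1) {a : Fin n → K} (ha : Function.Injective a) {x : Fin n → K}
    (h : ∀ t, ∑ i, x i * (t + a i) ^ d = 0) : x = 0 := by
  set P : K[X] := ∑ i, C (x i) * (X + C (a i)) ^ d
  have hP : P = 0 := Polynomial.funext fun t => by simpa [P, eval_finsetSum] using h t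
  refine eq_zero_of_forall_pow_sum_mul_pow_eq_zero ha fun r => ?_
  have hr : (r : ℕ) ≤ d := by omega
  have hcoeff : P.coeff (d - r) = (∑ i, x i * a i ^ (r : ℕ)) * d.choose (d - r) := by
    simp [P, coeff_X_add_C_pow, Nat.sub_sub_self hr, Finset.sum_mul, mul_assoc]
  have hchoose : (d.choose (d - r) : K) ≠ 0 := by
    exact_mod_cast (Nat.choose_pos (Nat.sub_le d r)).ne'
  simpa [hP, hchoose] using hcoeff.symm

theorem LinearIndependent.of_pair_pow {R ι : Type*} [CommRing R] [IsReduced R]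
    {u v : ι → R} {d : ℕ} (h : LinearIndependent R ![u ^ d, v ^ d]) :
    LinearIndependent R ![u, v] := by
  rw [LinearIndependent.pair_iff] at h ⊢
  intro s t hst
  have hsu : s • u = (-t) • v := by rw [neg_smul]; exact eq_neg_of_add_eq_zero_left hst
  have hpow : s ^ d • u ^ d + (-(-t) ^ d) • v ^ d = 0 := by
    rw [← _root_.smul_pow, hsu, _root_.smul_pow, neg_smul, add_neg_cancel]
  obtain ⟨hs, ht⟩ := h _ _ hpow
  exact ⟨eq_zero_of_pow_eq_zero hs, neg_eq_zero.mp (eq_zero_of_pow_eq_zero (neg_eq_zero.mp ht))⟩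

def vecTensorPow {R m : Type*} [CommSemiring R] (v : m → R) (d : ℕ) : (Fin d → m) → R :=
  fun f => ∏ t, v (f t)

theorem vecTensorPow_dotProduct {R m : Type*} [CommSemiring R] [Fintype m] (a b : m → R)
    (d : ℕ) : vecTensorPow a d ⬝ᵥ vecTensorPow b d = (a ⬝ᵥ b) ^ d := by
  simp only [dotProduct, vecTensorPow, ← Finset.prod_mul_distrib]
  rw [← Fintype.prod_sum fun (_ : Fin d) k => a k * b k, Finset.prod_const, Finset.card_univ,
    Fintype.card_fin]

theorem linearIndependent_dotProduct_pow {K m : Type*} [Field K] [CharZero K] [Fintype m]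
    {n d : ℕ} (hnd : n ≤ d + 1) {v : Fin n → m → K} (hv0 : ∀ i, v i ≠ 0)
    (hv : Pairwise fun i j => LinearIndependent K ![v i, v j]) :
    LinearIndependent K fun i (y : m → K) => (v i ⬝ᵥ y) ^ d := by
  obtain ⟨z, hz⟩ := exists_forall_dotProduct_ne_zero hv0
  set w : Fin n → m → K := fun i => (v i ⬝ᵥ z)⁻¹ • v i
  have hw : Function.Injective w := by
    intro i j hij
    by_contra hne
    have hcoeffs := LinearIndependent.pair_iff.mp (hv hne) (v i ⬝ᵥ z)⁻¹ (-(v j ⬝ᵥ z)⁻¹)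
      (by rw [neg_smul, ← sub_eq_add_neg, sub_eq_zero]; exact hij)
    exact inv_ne_zero (hz i) hcoeffs.1
  obtain ⟨u, hu⟩ := exists_forall_dotProduct_ne_zero
    (c := fun p : {p : Fin n × Fin n // p.1 ≠ p.2} => w p.1.1 - w p.1.2)
    fun p => sub_ne_zero.mpr (hw.ne p.2)
  set a : Fin n → K := fun i => w i ⬝ᵥ u
  have ha : Function.Injective a := by
    intro i j hij
    by_contra hne
    exact hu ⟨(i, j), hne⟩ (by simp only [sub_dotProduct, a] at hij ⊢; rw [hij, sub_self])
  have hline : ∀ i (t : K), v i ⬝ᵥ (t • z + u) = (v i ⬝ᵥ z) * (t + a i) := by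
    intro i t
    simp only [a, w, dotProduct_add, dotProduct_smul, smul_dotProduct, smul_eq_mul]
    field_simp [hz i]
  rw [Fintype.linearIndependent_iff]
  intro g hg
  have hx : (fun i => g i * (v i ⬝ᵥ z) ^ d) = 0 := by
    refine eq_zero_of_forall_sum_mul_add_pow_eq_zero hnd ha fun t => ?_
    have hgt := congrFun hg (t • z + u)
    simp only [Finset.sum_apply, Pi.smul_apply, smul_eq_mul, hline, mul_pow, Pi.zero_apply]
      at hgt
    simpa only [mul_assoc] using hgt
  intro i
  simpa [hz i] using congrFun hx i

theorem LinearIndependent.pairwise_of_pow {R ι κ : Type*} [CommRing R] [IsReduced R]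
    {u : ι → κ → R} {d : ℕ} (h : LinearIndependent R fun j => u j ^ d) :
    Pairwise fun i j => LinearIndependent R ![u i, u j] := by
  intro i j hij
  have hinj : Function.Injective ![i, j] := by
    intro a b; fin_cases a <;> fin_cases b <;> simp [hij, hij.symm]
  have hpair := h.comp _ hinj
  rw [← FinVec.map_eq] at hpair
  exact hpair.of_pair_pow

theorem Matrix.PosSemidef.exists_eq_mul_transpose {n : Type*} [Fintype n] {A : Matrix n n ℝ}
    (hA : A.PosSemidef) : ∃ V : Matrix n n ℝ, A = V * Vᵀ := by
  classical
  obtain ⟨B, rfl⟩ : ∃ B : Matrix n n ℝ, A = star B * B := by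
    open scoped MatrixOrder in exact CStarAlgebra.nonneg_iff_eq_star_mul_self.mp hA.nonneg
  refine ⟨Bᵀ, ?_⟩
  rw [transpose_transpose, star_eq_conjTranspose, conjTranspose_eq_transpose_of_trivial]

theorem posDef_hadamardPow_mul_transpose {m : Type*} [Fintype m] {n d : ℕ} (hnd : n ≤ d + 1)
    {V : Matrix (Fin n) m ℝ} (hV0 : ∀ i, V i ≠ 0)
    (hV : Pairwise fun i j => LinearIndependent ℝ ![V i, V j]) :
    (of fun i j => (V * Vᵀ) i j ^ d).PosDef := by
  set W : Matrix (Fin n) (Fin d → m) ℝ := of fun i => vecTensorPow (V i) d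
  have hW : LinearIndependent ℝ W.row := by
    let L : ((Fin d → m) → ℝ) →ₗ[ℝ] (m → ℝ) → ℝ :=
      LinearMap.pi fun y => (dotProductBilin ℝ ℝ).flip (vecTensorPow y d)
    refine .of_comp L ?_
    have hcomp : L ∘ W.row = fun i (y : m → ℝ) => (V i ⬝ᵥ y) ^ d :=
      funext fun i => funext fun y => vecTensorPow_dotProduct (V i) y d
    rw [hcomp]
    exact linearIndependent_dotProduct_pow hnd hV0 hV
  have hgram : of (fun i j => (V * Vᵀ) i j ^ d) = W * Wᴴ := by
    ext i j
    exact (vecTensorPow_dotProduct (V i) (V j) d).symm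
  rw [hgram]
  exact PosDef.mul_conjTranspose_self W (vecMul_injective_iff.mpr hW)

theorem kruskalRank_ge_two_iff_hadamard_powers_posDef_general (n : ℕ)
    (A : Matrix (Fin n) (Fin n) ℝ) (hA : A.PosSemidef) :
    ((∀ j : Fin n, (fun i => A i j) ≠ 0) ∧
        ∀ j₁ j₂ : Fin n, j₁ ≠ j₂ →
          LinearIndependent ℝ ![fun i => A i j₁, fun i => A i j₂]) ↔
      ∀ d : ℕ, n - 1 ≤ d → (Matrix.of fun i j => A i j ^ d).PosDef := by
  constructor
  · rintro ⟨hcol0, hcol⟩ d hd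
    obtain ⟨V, rfl⟩ := hA.exists_eq_mul_transpose
    have hcolV : ∀ j, (fun i => (V * Vᵀ) i j) = V.mulVecLin (V j) := fun j => rfl
    refine posDef_hadamardPow_mul_transpose (by omega) (fun j hj => hcol0 j ?_) fun i j hij => ?_
    · rw [hcolV, hj, map_zero]
    · refine .of_comp V.mulVecLin ?_
      have hpair := hcol i j hij
      rw [hcolV, hcolV] at hpair
      rwa [← FinVec.map_eq]
  · intro h
    -- a positive exponent keeps a zero column zero
    have hcols := linearIndependent_cols_of_isUnit (h (n + 1) (by omega)).isUnit
    refine ⟨fun j hj => hcols.ne_zero j ?_, hcols.pairwise_of_pow⟩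
    ext i
    simp [congrFun hj i]

/-- Let `n ≥ 2` and let `A ∈ ℝ^{n×n}` be symmetric nonnegative definite. The
Kruskal rank of `A` is at least `2` (i.e. every column of `A` is nonzero and any two distinct
columns of `A` are linearly independent) if and only if for every integer `d ≥ n − 1` the
`d`-th Hadamard power `A^∘d` is positive definite. -/
theorem kruskalRank_ge_two_iff_hadamard_powers_posDef (n : ℕ) (hn : 2 ≤ n)
    (A : Matrix (Fin n) (Fin n) ℝ) (hA : A.PosSemidef) :
    ((∀ j : Fin n, (fun i => A i j) ≠ 0) ∧
        ∀ j₁ j₂ : Fin n, j₁ ≠ j₂ →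
          LinearIndependent ℝ ![fun i => A i j₁, fun i => A i j₂]) ↔
      ∀ d : ℕ, n - 1 ≤ d → (Matrix.of fun i j => A i j ^ d).PosDef :=
  kruskalRank_ge_two_iff_hadamard_powers_posDef_general n A hA
end

section
/- Let n ≥ 2 and let A ∈ ℝ^{n×n} be symmetric nonnegative definite with Hadamard power rank h_A. Then for every integer d ≥ max{h_A − 1, 1}, the rank of the d-th Hadamard power satisfies rank(A^∘d) = h_A. -/
/-!
Write `A` as the Gram matrix of vectors `v i`. Then `A^∘d` is the Gram matrix of the tensor
powers `v i ^⊗ d`, so its rank is the dimension of their span. Proportional vectors have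
proportional tensor powers, so that span is spanned by the tensor powers of one representative
of each line through some `v i`; there are `h` such lines. At most `d + 1` pairwise independent
vectors have linearly independent `d`-th tensor powers: contracting a linear relation among them
against a functional that kills one of the vectors gives a relation of degree `d - 1` among the
others, which are fewer.
-/

open Matrix Module Submodule

variable {R K m ι : Type*}

def tensorPower [CommMonoid R] (d : ℕ) (x : m → R) : (Fin d → m) → R :=
  fun f => ∏ k, x (f k)

section CommSemiring

variable [CommSemiring R] {d : ℕ}

theorem tensorPower_smul (c : R) (x : m → R) :
    tensorPower d (c • x) = c ^ d • tensorPower d x := by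
  ext f
  simp [tensorPower, Finset.prod_mul_distrib]

theorem tensorPower_zero (hd : d ≠ 0) : tensorPower d (0 : m → R) = 0 := by
  ext f
  exact Finset.prod_eq_zero (Finset.mem_univ ⟨0, Nat.pos_of_ne_zero hd⟩) rfl

theorem tensorPower_succ_cons (x : m → R) (k : m) (g : Fin d → m) :
    tensorPower (d + 1) x (Fin.cons k g) = x k * tensorPower d x g := by
  simp [tensorPower, Fin.prod_univ_succ]

theorem dotProduct_tensorPower [Fintype m] (x y : m → R) :
    tensorPower d x ⬝ᵥ tensorPower d y = (x ⬝ᵥ y) ^ d := by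
  simp only [dotProduct, tensorPower, ← Finset.prod_mul_distrib]
  rw [← Fin.prod_const, Fintype.prod_sum]

end CommSemiring

section Field

variable [Field K] {d : ℕ}

theorem tensorPower_ne_zero {x : m → K} (hx : x ≠ 0) : tensorPower d x ≠ 0 := by
  obtain ⟨k, hk⟩ := Function.ne_iff.mp hx
  refine Function.ne_iff.mpr ⟨fun _ => k, ?_⟩
  simpa [tensorPower] using pow_ne_zero d hk

variable [Fintype m]

-- `contractFirst w T g = ∑ k, w k * T (Fin.cons k g)`
def contractFirst (w : m → K) : ((Fin (d + 1) → m) → K) →ₗ[K] ((Fin d → m) → K) :=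
  ∑ k, w k • LinearMap.funLeft K K (Fin.cons k)

theorem contractFirst_tensorPower (w x : m → K) :
    contractFirst w (tensorPower (d + 1) x) = (w ⬝ᵥ x) • tensorPower d x := by
  ext g
  simp [contractFirst, LinearMap.funLeft, tensorPower_succ_cons, dotProduct, Finset.sum_mul,
    mul_assoc]

theorem exists_dotProduct_eq_zero_ne_zero {x y : m → K} (h : LinearIndependent K ![x, y]) :
    ∃ w : m → K, w ⬝ᵥ x = 0 ∧ w ⬝ᵥ y ≠ 0 := by
  classical
  have hy : y ∉ K ∙ x := by
    rw [mem_span_singleton]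
    rintro ⟨a, rfl⟩
    exact (LinearIndependent.pair_iff' (h.ne_zero 0)).mp h a rfl
  obtain ⟨f, hfy, hfx⟩ := exists_dual_map_eq_bot_of_notMem hy inferInstance
  have hf : ∀ z, (dotProductEquiv K m).symm f ⬝ᵥ z = f z := fun z => by
    rw [← dotProductEquiv_apply_apply, LinearEquiv.apply_symm_apply]
  refine ⟨(dotProductEquiv K m).symm f, ?_, by rwa [hf]⟩
  rw [hf, ← mem_bot K, ← hfx]
  exact mem_map_of_mem (mem_span_singleton_self x)

theorem linearIndepOn_of_card_le_one {V : Type*} [AddCommGroup V] [Module K V] {f : ι → V}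
    {s : Finset ι} (hf : ∀ i ∈ s, f i ≠ 0) (hs : s.card ≤ 1) : LinearIndepOn K f s := by
  rcases s.eq_empty_or_nonempty with rfl | ⟨i, hi⟩
  · simp
  obtain rfl : s = {i} :=
    Finset.eq_singleton_iff_unique_mem.mpr ⟨hi, fun j hj => Finset.card_le_one.mp hs j hj i hi⟩
  simpa [linearIndepOn_singleton_iff] using hf i hi

theorem linearIndepOn_tensorPower {v : ι → m → K} {s : Finset ι} (hv0 : ∀ i ∈ s, v i ≠ 0)
    (hv : (s : Set ι).Pairwise fun i j => LinearIndependent K ![v i, v j])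
    (hs : s.card ≤ d + 1) : LinearIndepOn K (fun i => tensorPower d (v i)) s := by
  classical
  induction d generalizing s with
  | zero => exact linearIndepOn_of_card_le_one (fun i hi => tensorPower_ne_zero (hv0 i hi)) hs
  | succ e ih =>
    rcases le_or_gt s.card 1 with hs1 | hs1
    · exact linearIndepOn_of_card_le_one (fun i hi => tensorPower_ne_zero (hv0 i hi)) hs1
    rw [linearIndepOn_finset_iff]
    intro c hc j hj
    obtain ⟨j', hj', hj'j⟩ := s.exists_mem_ne hs1 j
    obtain ⟨w, hwj', hwj⟩ := exists_dotProduct_eq_zero_ne_zero (hv hj' hj hj'j)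
    -- contracting against `w` kills the `j'` term and lowers the degree
    have hrel : ∑ i ∈ s.erase j', (c i * (w ⬝ᵥ v i)) • tensorPower e (v i) = 0 := by
      have := congrArg (contractFirst w) hc
      simp only [map_sum, map_smul, contractFirst_tensorPower, smul_smul, map_zero] at this
      rwa [← Finset.sum_erase_add _ _ hj', hwj', mul_zero, zero_smul, add_zero] at this
    have hind := ih (fun i hi => hv0 i (Finset.mem_of_mem_erase hi))
      (hv.mono (by simp)) (by rw [Finset.card_erase_of_mem hj']; omega)
    have := linearIndepOn_finset_iff.mp hind _ hrel j (Finset.mem_erase.mpr ⟨hj'j.symm, hj⟩)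
    exact (mul_eq_zero.mp this).resolve_right hwj

theorem finrank_span_tensorPower_eq_card {v : ι → m → K} {s : Finset ι}
    (hv0 : ∀ i ∈ s, v i ≠ 0) (hv : (s : Set ι).Pairwise fun i j => LinearIndependent K ![v i, v j])
    (hcover : ∀ j, ∃ i ∈ s, ∃ c : K, v j = c • v i) (hs : s.card ≤ d + 1) :
    finrank K (span K (Set.range fun j => tensorPower d (v j))) = s.card := by
  have hspan : span K (Set.range fun j => tensorPower d (v j)) =
      span K (Set.range fun i : (s : Set ι) => tensorPower d (v i)) := by
    refine le_antisymm (span_le.mpr ?_) (span_mono (Set.range_subset_iff.mpr fun i => ⟨i, rfl⟩))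
    rintro _ ⟨j, rfl⟩
    obtain ⟨i, hi, c, hc⟩ := hcover j
    simp only [hc, tensorPower_smul, SetLike.mem_coe]
    exact smul_mem _ _ (subset_span ⟨⟨i, hi⟩, rfl⟩)
  rw [hspan, finrank_span_eq_card (linearIndepOn_tensorPower hv0 hv hs)]
  simp

theorem exists_linearIndependent_pair_of_two_le_finrank {V : Type*} [AddCommGroup V] [Module K V]
    {v : ι → V} (hv : 2 ≤ finrank K (span K (Set.range v))) :
    ∃ i j, LinearIndependent K ![v i, v j] := by
  by_contra! hdep
  by_cases h0 : ∀ j, v j = 0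
  · rw [span_eq_bot.mpr (by rintro _ ⟨j, rfl⟩; exact h0 j), finrank_bot] at hv
    omega
  obtain ⟨i, hi⟩ := not_forall.mp h0
  have hle : span K (Set.range v) ≤ K ∙ v i := by
    refine span_le.mpr ?_
    rintro _ ⟨j, rfl⟩
    have := hdep i j
    simp only [LinearIndependent.pair_iff' hi, not_forall, not_not] at this
    exact mem_span_singleton.mpr this
  have := finrank_mono hle
  rw [finrank_span_singleton hi] at this
  omega

theorem finrank_span_tensorPower_of_finrank_le_one {v : ι → m → K}
    (hv : finrank K (span K (Set.range v)) ≤ 1) (hd : d ≠ 0) :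
    finrank K (span K (Set.range fun j => tensorPower d (v j))) =
      finrank K (span K (Set.range v)) := by
  by_cases h0 : ∀ j, v j = 0
  · rw [span_eq_bot.mpr (by rintro _ ⟨j, rfl⟩; simp [h0 j, tensorPower_zero hd]),
      span_eq_bot.mpr (by rintro _ ⟨j, rfl⟩; exact h0 j), finrank_bot, finrank_bot]
  obtain ⟨i, hi⟩ := not_forall.mp h0
  have hspan : span K (Set.range v) = K ∙ v i :=
    (eq_of_le_of_finrank_le (span_mono (by simp)) (by rwa [finrank_span_singleton hi])).symm
  have hcover (j : ι) : ∃ i' ∈ ({i} : Finset ι), ∃ c : K, v j = c • v i' := by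
    obtain ⟨c, hc⟩ := mem_span_singleton.mp (hspan ▸ subset_span ⟨j, rfl⟩ : v j ∈ K ∙ v i)
    exact ⟨i, Finset.mem_singleton_self i, c, hc.symm⟩
  rw [finrank_span_tensorPower_eq_card (by simpa using hi) (by simp) hcover (by simp),
    hspan, finrank_span_singleton hi, Finset.card_singleton]

theorem finrank_span_tensorPower_of_isGreatest {v : ι → m → K} {h : ℕ}
    (hmax : IsGreatest {k | 0 < k ∧ ∃ s : Finset ι, s.card = k ∧
      (s : Set ι).Pairwise fun i j => LinearIndependent K ![v i, v j]} h)
    (hv : 2 ≤ finrank K (span K (Set.range v))) (hd : h ≤ d + 1) :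
    finrank K (span K (Set.range fun j => tensorPower d (v j))) = h := by
  classical
  obtain ⟨⟨-, s, rfl, hs⟩, hub⟩ := hmax
  obtain ⟨j₁, j₂, h₁₂⟩ := exists_linearIndependent_pair_of_two_le_finrank hv
  have hne : j₁ ≠ j₂ := by
    rintro rfl
    exact h₁₂.injective.ne (show (0 : Fin 2) ≠ 1 by decide) rfl
  have h2 : 2 ≤ s.card := hub ⟨two_pos, {j₁, j₂}, Finset.card_pair hne, by
    simpa [Set.pairwise_pair, hne] using ⟨h₁₂, LinearIndependent.pair_symm_iff.mp h₁₂⟩⟩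
  have hs0 (i : ι) (hi : i ∈ s) : v i ≠ 0 := by
    obtain ⟨i', hi', hne⟩ := s.exists_mem_ne h2 i
    simpa using (hs hi hi' hne.symm).ne_zero 0
  refine finrank_span_tensorPower_eq_card hs0 hs (fun j => ?_) hd
  by_contra! hj
  have hjs : j ∉ s := fun hjs => hj j hjs 1 (one_smul K _).symm
  -- otherwise `insert j s` would be a larger pairwise independent set
  have : (insert j s).card ≤ s.card := hub ⟨Finset.card_pos.mpr ⟨j, Finset.mem_insert_self j s⟩,
    insert j s, rfl, by
      rw [Finset.coe_insert, Set.pairwise_insert]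
      refine ⟨hs, fun i hi _ => ?_⟩
      have hij : LinearIndependent K ![v i, v j] :=
        (LinearIndependent.pair_iff' (hs0 i hi)).mpr fun c hc => hj i hi c hc.symm
      exact ⟨LinearIndependent.pair_symm_iff.mp hij, hij⟩⟩
  rw [Finset.card_insert_of_notMem hjs] at this
  omega

end Field

section Gram

variable [Fintype m]

theorem Matrix.PosSemidef.exists_eq_gram [Fintype ι] {A : Matrix ι ι ℝ} (hA : A.PosSemidef) :
    ∃ v : ι → ι → ℝ, A = of fun i j => v i ⬝ᵥ v j := by
  classical
  open scoped MatrixOrder in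
  obtain ⟨B, rfl⟩ := CStarAlgebra.nonneg_iff_eq_star_mul_self.mp hA.nonneg
  exact ⟨Bᵀ, by ext i j; simp [mul_apply, dotProduct]⟩

theorem rank_gram [Fintype ι] (v : ι → m → ℝ) :
    (of fun i j => v i ⬝ᵥ v j).rank = finrank ℝ (span ℝ (Set.range v)) := by
  have : (of fun i j => v i ⬝ᵥ v j) = of v * (of v)ᵀ := by
    ext i j
    simp [mul_apply, dotProduct]
  rw [this, rank_self_mul_transpose, rank_eq_finrank_span_row]
  rfl

theorem eq_zero_of_mem_span_of_forall_dotProduct_eq_zero {v : ι → m → ℝ} {x : m → ℝ}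
    (hx : x ∈ span ℝ (Set.range v)) (h : ∀ i, v i ⬝ᵥ x = 0) : x = 0 := by
  classical
  have hker : span ℝ (Set.range v) ≤ LinearMap.ker (dotProductEquiv ℝ m x) := by
    refine span_le.mpr ?_
    rintro _ ⟨i, rfl⟩
    simp [dotProduct_comm x, h i]
  exact dotProduct_self_eq_zero.mp (by simpa using hker hx)

theorem linearIndependent_pair_gram_iff (v : ι → m → ℝ) (j₁ j₂ : ι) :
    LinearIndependent ℝ ![fun i => v i ⬝ᵥ v j₁, fun i => v i ⬝ᵥ v j₂] ↔
      LinearIndependent ℝ ![v j₁, v j₂] := by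
  have hdisj : Disjoint (span ℝ (Set.range ![v j₁, v j₂])) (LinearMap.ker (of v).mulVecLin) := by
    refine disjoint_def.mpr fun x hx hker => ?_
    refine eq_zero_of_mem_span_of_forall_dotProduct_eq_zero (v := v)
      (span_mono (by simp [Set.insert_subset_iff]) hx) fun i => ?_
    exact congrFun (LinearMap.mem_ker.mp hker) i
  rw [← (of v).mulVecLin.linearIndependent_iff_of_disjoint hdisj]
  congr! 1
  ext k : 1
  fin_cases k <;> rfl

end Gram

theorem rank_hadamard_power_eq_hadamardPowerRank_general (n : ℕ)
    (A : Matrix (Fin n) (Fin n) ℝ) (hA : A.PosSemidef) (h : ℕ)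
    (hh : 2 ≤ A.rank →
      IsGreatest {k : ℕ | 0 < k ∧ ∃ s : Finset (Fin n), s.card = k ∧
        ∀ j₁ ∈ s, ∀ j₂ ∈ s, j₁ ≠ j₂ →
          LinearIndependent ℝ ![fun i => A i j₁, fun i => A i j₂]} h)
    (hh' : A.rank < 2 → h = A.rank) :
    ∀ d : ℕ, max (h - 1) 1 ≤ d → (Matrix.of fun i j => A i j ^ d).rank = h := by
  intro d hd
  obtain ⟨v, rfl⟩ := hA.exists_eq_gram
  simp only [of_apply, ← dotProduct_tensorPower, rank_gram, linearIndependent_pair_gram_iff]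
    at hh hh' ⊢
  rcases le_or_gt 2 (finrank ℝ (span ℝ (Set.range v))) with h2 | h2
  · exact finrank_span_tensorPower_of_isGreatest (hh h2) h2 (by omega)
  · rw [hh' h2]
    exact finrank_span_tensorPower_of_finrank_le_one (by omega) (by omega)

/-- Let `n ≥ 2` and let `A ∈ ℝ^{n×n}` be symmetric nonnegative definite with
Hadamard power rank `h` (the largest positive integer `h` such that there exist `h` distinct
columns of `A` that are pairwise linearly independent, when `rank A ≥ 2`; and `h = rank A`
when `rank A < 2`). Then for every integer `d ≥ max{h − 1, 1}` one has `rank (A^∘d) = h`. -/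
theorem rank_hadamard_power_eq_hadamardPowerRank (n : ℕ) (hn : 2 ≤ n)
    (A : Matrix (Fin n) (Fin n) ℝ) (hA : A.PosSemidef) (h : ℕ)
    (hh : 2 ≤ A.rank →
      IsGreatest {k : ℕ | 0 < k ∧ ∃ s : Finset (Fin n), s.card = k ∧
        ∀ j₁ ∈ s, ∀ j₂ ∈ s, j₁ ≠ j₂ →
          LinearIndependent ℝ ![fun i => A i j₁, fun i => A i j₂]} h)
    (hh' : A.rank < 2 → h = A.rank) :
    ∀ d : ℕ, max (h - 1) 1 ≤ d → (Matrix.of fun i j => A i j ^ d).rank = h :=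
  rank_hadamard_power_eq_hadamardPowerRank_general n A hA h hh hh'
end

section
/- Let n ∈ ℕ, let X ∈ {0,1}^{n×2^n} be the matrix whose column x_j (for j = 0, 1, …, 2^n − 1) contains the binary digits of j, i.e., x_{ℓ,j} ∈ {0,1} with j = Σ_{ℓ=1}^n x_{ℓ,j} 2^{ℓ−1}, and set K = X^T X. Then for every positive integer d, the rank of the d-th Hadamard power K^∘d equals Σ_{p=1}^d binom(n, p) if d ≤ n, and equals 2^n − 1 if d ≥ n. -/
/-!
Index the columns by subsets of `{0, …, n - 1}` through their binary digits, so that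
`K S T = #(S ∩ T)`. Sorting the maps `[d] → S ∩ T` by their image gives
`#(S ∩ T) ^ d = ∑_{σ ⊆ S ∩ T} s_d(σ)`, where `s_d(σ)` counts the maps of `[d]` onto `σ`; that is,
`K^∘d = Zᵀ D Z` with `Z` the zeta matrix of the Boolean lattice and `D = diag s_d`. The zeta
matrix of a finite poset is unitriangular, hence invertible, so the rank of `K^∘d` is the number
of `σ` with `s_d(σ) ≠ 0`, i.e. with `1 ≤ #σ ≤ d`.
-/

open Finset Matrix

theorem det_of_zeta (R : Type*) [CommRing R] {P : Type*} [PartialOrder P] [Fintype P]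
    [DecidableEq P] [DecidableLE P] : (of (IncidenceAlgebra.zeta R : P → P → R)).det = 1 := by
  -- Listed along a linear extension of `P`, the zeta matrix is unitriangular.
  let _ : Fintype (LinearExtension P) := ‹Fintype P›
  let _ : DecidableEq (LinearExtension P) := ‹DecidableEq P›
  let e : P ≃ LinearExtension P := Equiv.refl P
  rw [← det_reindex_self e, det_of_isUpperTriangular]
  · exact prod_eq_one fun a _ => IncidenceAlgebra.zeta_of_le (le_refl (e.symm a))
  · intro a b hba
    simp only [reindex_apply, submatrix_apply, of_apply, IncidenceAlgebra.zeta_apply,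
      ite_eq_right_iff]
    exact fun hab => absurd (toLinearExtension.monotone hab) (not_le.2 hba)

section MapsOnto

variable {α ι : Type*} [Fintype α] [DecidableEq α] [Fintype ι] [DecidableEq ι]

variable (ι) in
def numMapsOnto (σ : Finset α) : ℕ := #{f : ι → α | univ.image f = σ}

theorem card_pow_eq_sum_numMapsOnto (A : Finset α) :
    #A ^ Fintype.card ι = ∑ σ ∈ A.powerset, numMapsOnto ι σ := by
  have hmaps : #A ^ Fintype.card ι = #(Fintype.piFinset fun _ : ι => A) := by
    simp [Fintype.card_piFinset]
  have hrange (f : ι → α) : f ∈ Fintype.piFinset (fun _ => A) ↔ univ.image f ∈ A.powerset := by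
    simp [subset_iff]
  rw [hmaps, card_eq_sum_card_fiberwise (f := fun f => univ.image f) (t := A.powerset)
    fun f hf => (hrange f).1 hf]
  refine sum_congr rfl fun σ hσ => congrArg card ?_
  ext f
  simp only [mem_filter, mem_univ, true_and, and_iff_right_iff_imp]
  rintro rfl
  exact (hrange f).2 hσ

theorem numMapsOnto_ne_zero_iff [Nonempty ι] {σ : Finset α} :
    numMapsOnto ι σ ≠ 0 ↔ σ.Nonempty ∧ #σ ≤ Fintype.card ι := by
  simp only [numMapsOnto, ← pos_iff_ne_zero, card_pos, filter_nonempty_iff, mem_univ, true_and]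
  constructor
  · rintro ⟨f, rfl⟩
    exact ⟨univ_nonempty.image f, card_image_le.trans_eq card_univ⟩
  · rintro ⟨hne, hcard⟩
    have : Nonempty σ := hne.to_subtype
    obtain ⟨g⟩ : Nonempty (σ ↪ ι) :=
      Function.Embedding.nonempty_of_card_le (by rwa [Fintype.card_coe])
    refine ⟨fun i => (Function.invFun g i : σ), ?_⟩
    ext x
    simp only [mem_image, mem_univ, true_and]
    refine ⟨fun ⟨i, hi⟩ => hi ▸ (Function.invFun g i).2, fun hx => ⟨g ⟨x, hx⟩, ?_⟩⟩
    rw [Function.leftInverse_invFun g.injective]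

end MapsOnto

section SubsetCounts

variable {α : Type*} [Fintype α]

theorem card_nonempty_card_le_eq_sum_choose (d : ℕ) :
    #{σ : Finset α | σ.Nonempty ∧ #σ ≤ d} = ∑ p ∈ Icc 1 d, (Fintype.card α).choose p := by
  rw [card_eq_sum_card_fiberwise (f := card) (t := Icc 1 d)]
  · refine sum_congr rfl fun p hp => ?_
    obtain ⟨hp_pos, hp_le⟩ := mem_Icc.1 hp
    rw [← card_univ, ← card_powersetCard, powersetCard_eq_filter, filter_filter, powerset_univ]
    congr 1
    exact filter_congr fun σ _ => by
      constructor
      · exact And.right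
      · rintro rfl
        exact ⟨⟨card_pos.1 hp_pos, hp_le⟩, rfl⟩
  · intro σ hσ
    obtain ⟨-, hne, hle⟩ := mem_filter.1 (mem_coe.1 hσ)
    exact mem_Icc.2 ⟨card_pos.2 hne, hle⟩

theorem card_nonempty_card_le_eq_two_pow_sub_one {d : ℕ} (h : Fintype.card α ≤ d) :
    #{σ : Finset α | σ.Nonempty ∧ #σ ≤ d} = 2 ^ Fintype.card α - 1 := by
  classical
  have : ({σ : Finset α | σ.Nonempty ∧ #σ ≤ d} : Finset _) = univ.erase ∅ := by
    ext σ
    simp [nonempty_iff_ne_empty, (card_le_univ σ).trans h]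
  rw [this, card_erase_of_mem (mem_univ _), card_univ, Fintype.card_finset]

end SubsetCounts

section IntersectionSizes

variable {α : Type*} [Fintype α] [DecidableEq α]

theorem pow_card_inter_eq_zeta_transpose_mul_diagonal_mul_zeta (R : Type*) [CommRing R]
    (ι : Type*) [Fintype ι] [DecidableEq ι] :
    of (fun S T : Finset α => (#(S ∩ T) : R) ^ Fintype.card ι) =
      (of (IncidenceAlgebra.zeta R))ᵀ * diagonal (fun σ => (numMapsOnto ι σ : R)) *
        of (IncidenceAlgebra.zeta R) := by
  ext S T
  rw [mul_apply]
  simp only [of_apply, mul_diagonal, transpose_apply, IncidenceAlgebra.zeta_apply, boole_mul,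
    mul_boole, ← ite_and, ← subset_inter_iff]
  rw [← sum_filter, filter_subset_univ, ← Nat.cast_pow, card_pow_eq_sum_numMapsOnto, Nat.cast_sum,
    inter_comm]

theorem rank_pow_card_inter (R : Type*) [Field R] [CharZero R] {d : ℕ} (hd : 0 < d) :
    (of fun S T : Finset α => (#(S ∩ T) : R) ^ d).rank =
      #{σ : Finset α | σ.Nonempty ∧ #σ ≤ d} := by
  have : Nonempty (Fin d) := ⟨⟨0, hd⟩⟩
  classical
  have hfactor := pow_card_inter_eq_zeta_transpose_mul_diagonal_mul_zeta (α := α) R (Fin d)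
  rw [Fintype.card_fin] at hfactor
  rw [hfactor, rank_mul_eq_left_of_isUnit_det _ _ (by rw [det_of_zeta]; exact isUnit_one),
    rank_mul_eq_right_of_isUnit_det _ _ (by rw [det_transpose, det_of_zeta]; exact isUnit_one),
    rank_diagonal, Fintype.card_subtype]
  congr 1
  exact filter_congr fun σ _ => by
    rw [ne_eq, Nat.cast_eq_zero, ← ne_eq, numMapsOnto_ne_zero_iff, Fintype.card_fin]

end IntersectionSizes

theorem transpose_mul_self_apply_of_indicator {R κ ι : Type*} [NonAssocSemiring R] [Fintype κ]
    [DecidableEq κ] (S : ι → Finset κ) (X : Matrix κ ι R)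
    (hX : ∀ k i, X k i = if k ∈ S i then 1 else 0) (i j : ι) :
    (Xᵀ * X) i j = #(S i ∩ S j) := by
  simp only [mul_apply, transpose_apply, hX, boole_mul, ← ite_and, ← mem_inter]
  rw [sum_boole, filter_mem_eq_inter, univ_inter]

section BinaryDigits

def bitFinset (n : ℕ) (j : Fin (2 ^ n)) : Finset (Fin n) := {ℓ | (j : ℕ).testBit ℓ}

theorem bitFinset_injective (n : ℕ) : Function.Injective (bitFinset n) := by
  intro i j h
  refine Fin.ext (Nat.eq_of_testBit_eq fun ℓ => ?_)
  by_cases hℓ : ℓ < n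
  · simpa [bitFinset] using congrArg (⟨ℓ, hℓ⟩ ∈ ·) h
  · have hlt (k : Fin (2 ^ n)) : (k : ℕ).testBit ℓ = false :=
      Nat.testBit_eq_false_of_lt (k.2.trans_le (Nat.pow_le_pow_right two_pos (not_lt.1 hℓ)))
    rw [hlt, hlt]

noncomputable def bitFinsetEquiv (n : ℕ) : Fin (2 ^ n) ≃ Finset (Fin n) :=
  Equiv.ofBijective _
    ((Fintype.bijective_iff_injective_and_card _).2 ⟨bitFinset_injective n, by simp⟩)

end BinaryDigits

/-- Let `X ∈ {0,1}^{n×2^n}` be the matrix whose `j`-th column contains the binary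
digits of `j` (the entry in row `ℓ` being the bit of `j` of weight `2^ℓ`, rows indexed from `0`),
and set `K = Xᵀ X`. Then for every positive integer `d`, the rank of the `d`-th Hadamard power
`K^∘d` equals `Σ_{p=1}^d binom(n,p)` if `d ≤ n`, and equals `2^n − 1` if `d ≥ n`. -/
theorem rank_hadamard_power_boolean_gram (n : ℕ)
    (X : Matrix (Fin n) (Fin (2 ^ n)) ℝ)
    (hX : ∀ ℓ j, X ℓ j = if Nat.testBit (j : ℕ) (ℓ : ℕ) then 1 else 0)
    (K : Matrix (Fin (2 ^ n)) (Fin (2 ^ n)) ℝ) (hK : K = X.transpose * X)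
    (d : ℕ) (hd : 0 < d) :
    (d ≤ n → (Matrix.of fun i j => K i j ^ d).rank = ∑ p ∈ Finset.Icc 1 d, n.choose p) ∧
    (n ≤ d → (Matrix.of fun i j => K i j ^ d).rank = 2 ^ n - 1) := by
  have hXbits : ∀ ℓ j, X ℓ j = if ℓ ∈ bitFinset n j then 1 else 0 := by
    simpa [bitFinset] using hX
  have hpow : (of fun i j => K i j ^ d) =
      (of fun S T : Finset (Fin n) => (#(S ∩ T) : ℝ) ^ d).submatrix
        (bitFinsetEquiv n) (bitFinsetEquiv n) := by
    ext i j
    simp [hK, transpose_mul_self_apply_of_indicator _ X hXbits, bitFinsetEquiv]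
  have hrank : (of fun i j => K i j ^ d).rank = #{σ : Finset (Fin n) | σ.Nonempty ∧ #σ ≤ d} := by
    rw [hpow, rank_submatrix, rank_pow_card_inter ℝ hd]
  refine ⟨fun _ => ?_, fun hnd => ?_⟩
  · rw [hrank, card_nonempty_card_le_eq_sum_choose, Fintype.card_fin]
  · rw [hrank, card_nonempty_card_le_eq_two_pow_sub_one (by rwa [Fintype.card_fin]),
      Fintype.card_fin]
end

section
/- Let n ∈ ℕ, let X ∈ {0,1}^{n×2^n} be the matrix whose column x_j (j = 0, …, 2^n − 1) is the vector of binary digits of j, let B_1, …, B_n ∈ {0,1}^{2^n} be the rows of X (as column vectors), and set K = X^T X. Then for every positive integer d, the column space of K^∘d equals the span of the vectors B_{ℓ_1} ∘ ⋯ ∘ B_{ℓ_p} taken over all 1 ≤ p ≤ d and all strictly increasing tuples 1 ≤ ℓ_1 < ⋯ < ℓ_p ≤ n. -/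
open Finset

private lemma idem_prod_comp {n d : ℕ} (a : Fin n → ℝ) (ha : ∀ ℓ, a ℓ = 0 ∨ a ℓ = 1)
    (g : Fin d → Fin n) :
    ∏ k, a (g k) = ∏ ℓ ∈ Finset.image g Finset.univ, a ℓ := by
  rw [Finset.prod_comp]
  refine Finset.prod_congr rfl fun ℓ hℓ => ?_
  have hpos : 0 < (Finset.univ.filter fun k => g k = ℓ).card := by
    obtain ⟨k, _, rfl⟩ := Finset.mem_image.1 hℓ
    exact Finset.card_pos.2 ⟨k, by simp⟩
  rcases ha ℓ with h | h <;> rw [h] <;> simp [zero_pow hpos.ne']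

private lemma sum_filter_superset {n : ℕ} (s r : Finset (Fin n)) (hr : r ⊆ s) :
    ∑ t ∈ s.powerset.filter (fun t => r ⊆ t), (-1:ℝ)^t.card
      = if r = s then (-1)^s.card else 0 := by
  have hb : ∑ t ∈ s.powerset.filter (fun t => r ⊆ t), (-1:ℝ)^t.card
      = ∑ u ∈ (s \ r).powerset, (-1:ℝ)^(u ∪ r).card := by
    refine Finset.sum_nbij' (fun t => t \ r) (fun u => u ∪ r) ?_ ?_ ?_ ?_ ?_
    · intro t ht
      rw [Finset.mem_filter, Finset.mem_powerset] at ht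
      exact Finset.mem_powerset.2 (Finset.sdiff_subset_sdiff ht.1 le_rfl)
    · intro u hu
      rw [Finset.mem_powerset] at hu
      refine Finset.mem_filter.2 ⟨Finset.mem_powerset.2 ?_, Finset.subset_union_right⟩
      exact Finset.union_subset (hu.trans (Finset.sdiff_subset)) hr
    · intro t ht
      rw [Finset.mem_filter] at ht
      exact Finset.sdiff_union_of_subset ht.2
    · intro u hu
      rw [Finset.mem_powerset] at hu
      exact Finset.union_sdiff_cancel_right
        (Finset.disjoint_of_subset_left hu Finset.sdiff_disjoint)
    · intro t ht
      rw [Finset.mem_filter] at ht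
      rw [Finset.sdiff_union_of_subset ht.2]
  rw [hb]
  have hc : ∀ u ∈ (s \ r).powerset, (-1:ℝ)^(u ∪ r).card = (-1:ℝ)^r.card * (-1:ℝ)^u.card := by
    intro u hu
    rw [Finset.mem_powerset] at hu
    have hdisj : Disjoint u r := Finset.disjoint_of_subset_left hu Finset.sdiff_disjoint
    rw [Finset.card_union_of_disjoint hdisj, pow_add, mul_comm]
  rw [Finset.sum_congr rfl hc, ← Finset.mul_sum]
  have hz : ∑ u ∈ (s \ r).powerset, (-1:ℝ)^u.card
      = if s \ r = ∅ then 1 else 0 := by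
    have := Finset.sum_powerset_neg_one_pow_card (x := s \ r)
    have h2 : ((∑ m ∈ (s \ r).powerset, (-1 : ℤ) ^ m.card : ℤ) : ℝ)
        = ∑ u ∈ (s \ r).powerset, (-1:ℝ)^u.card := by push_cast; rfl
    rw [← h2, this]
    split <;> norm_num
  rw [hz]
  by_cases h : r = s
  · subst h
    simp
  · have : s \ r ≠ ∅ := by
      intro hempty
      exact h (Finset.Subset.antisymm hr (by
        intro x hx
        by_contra hxr
        exact (Finset.eq_empty_iff_forall_notMem.1 hempty x) (Finset.mem_sdiff.2 ⟨hx, hxr⟩)))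
    simp [h, this]

private lemma diff_sum {n d : ℕ} (x : Fin n → ℝ) (hx : ∀ ℓ, x ℓ = 0 ∨ x ℓ = 1)
    (s : Finset (Fin n)) :
    ∑ t ∈ s.powerset, (-1:ℝ)^t.card * (∑ ℓ ∈ t, x ℓ)^d
      = (∑ t ∈ s.powerset, (-1:ℝ)^t.card * (t.card:ℝ)^d) * ∏ ℓ ∈ s, x ℓ := by
  by_cases hall : ∀ ℓ ∈ s, x ℓ = 1
  · rw [Finset.prod_eq_one hall, mul_one]
    refine Finset.sum_congr rfl fun t ht => ?_
    have h1 : ∑ ℓ ∈ t, x ℓ = (t.card : ℝ) := by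
      rw [Finset.sum_congr rfl (fun ℓ hℓ => hall ℓ (Finset.mem_powerset.1 ht hℓ))]
      simp
    rw [h1]
  · push_neg at hall
    obtain ⟨ℓ₀, hℓ₀s, hℓ₀⟩ := hall
    have hx0 : x ℓ₀ = 0 := (hx ℓ₀).resolve_right hℓ₀
    rw [Finset.prod_eq_zero hℓ₀s hx0, mul_zero]
    have hs : insert ℓ₀ (s.erase ℓ₀) = s := Finset.insert_erase hℓ₀s
    rw [← hs, Finset.sum_powerset_insert (Finset.notMem_erase _ _)]
    have hpair : ∀ t ∈ (s.erase ℓ₀).powerset,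
        (-1:ℝ)^(insert ℓ₀ t).card * (∑ ℓ ∈ insert ℓ₀ t, x ℓ)^d
          = -((-1:ℝ)^t.card * (∑ ℓ ∈ t, x ℓ)^d) := by
      intro t ht
      rw [Finset.mem_powerset] at ht
      have hℓ₀t : ℓ₀ ∉ t := fun h => Finset.notMem_erase ℓ₀ s (ht h)
      rw [Finset.card_insert_of_notMem hℓ₀t, Finset.sum_insert hℓ₀t, hx0, zero_add,
        pow_succ, mul_comm ((-1:ℝ)^t.card) (-1)]
      ring
    rw [Finset.sum_congr rfl hpair, Finset.sum_neg_distrib]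
    ring

private lemma cprime_ne_zero {n d : ℕ} (hd : 0 < d) (s : Finset (Fin n)) (hne : s.Nonempty)
    (hcard : s.card ≤ d) :
    (∑ t ∈ s.powerset, (-1:ℝ)^t.card * (t.card:ℝ)^d) ≠ 0 := by
  classical
  set P : Finset (Fin n) → Finset (Fin d → Fin n) :=
    fun t => Fintype.piFinset (fun _ : Fin d => t) with hP
  have hcardP : ∀ t : Finset (Fin n), ((t.card:ℝ))^d = ∑ _f ∈ P t, (1:ℝ) := by
    intro t
    rw [Finset.sum_const, nsmul_eq_mul, mul_one, hP, Fintype.card_piFinset]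
    push_cast
    simp
  have hPt : ∀ t ∈ s.powerset,
      P t = (P s).filter (fun f => Finset.image f Finset.univ ⊆ t) := by
    intro t ht
    rw [Finset.mem_powerset] at ht
    ext f
    simp only [hP, Fintype.mem_piFinset, Finset.mem_filter, Finset.image_subset_iff,
      Finset.mem_univ, forall_const, true_implies]
    exact ⟨fun h => ⟨fun k => ht (h k), h⟩, fun h => h.2⟩
  have step : (∑ t ∈ s.powerset, (-1:ℝ)^t.card * (t.card:ℝ)^d)
      = ∑ f ∈ P s, (if Finset.image f Finset.univ = s then (-1:ℝ)^s.card else 0) := by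
    calc ∑ t ∈ s.powerset, (-1:ℝ)^t.card * (t.card:ℝ)^d
        = ∑ t ∈ s.powerset, ∑ f ∈ P s,
            (if Finset.image f Finset.univ ⊆ t then (-1:ℝ)^t.card else 0) := by
          refine Finset.sum_congr rfl fun t ht => ?_
          rw [hcardP, Finset.mul_sum]
          rw [hPt t ht, Finset.sum_filter]
          simp
      _ = ∑ f ∈ P s, ∑ t ∈ s.powerset,
            (if Finset.image f Finset.univ ⊆ t then (-1:ℝ)^t.card else 0) :=
          Finset.sum_comm
      _ = ∑ f ∈ P s, (if Finset.image f Finset.univ = s then (-1:ℝ)^s.card else 0) := by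
          refine Finset.sum_congr rfl fun f hf => ?_
          rw [← Finset.sum_filter, sum_filter_superset]
          rw [hP, Fintype.mem_piFinset] at hf
          rw [Finset.image_subset_iff]
          intro k _
          exact hf k
  -- an explicit surjection
  obtain ⟨a₀, ha₀⟩ := hne
  have hposcard : 0 < s.card := Finset.card_pos.2 ⟨a₀, ha₀⟩
  set e : Fin s.card → Fin n := fun i => ((s.equivFin.symm i : {x // x ∈ s}) : Fin n) with he
  set f : Fin d → Fin n := fun k =>
    if h : (k:ℕ) < s.card then e ⟨k, h⟩ else a₀ with hf
  have hfmem : ∀ k, f k ∈ s := by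
    intro k
    rw [hf]
    dsimp only
    split
    · exact (s.equivFin.symm _).2
    · exact ha₀
  have hfsurj : Finset.image f Finset.univ = s := by
    apply Finset.Subset.antisymm
    · intro x hx
      obtain ⟨k, _, rfl⟩ := Finset.mem_image.1 hx
      exact hfmem k
    · intro a ha
      refine Finset.mem_image.2 ?_
      set i : Fin s.card := s.equivFin ⟨a, ha⟩ with hi
      refine ⟨⟨(i:ℕ), lt_of_lt_of_le i.2 hcard⟩, Finset.mem_univ _, ?_⟩
      rw [hf]
      dsimp only
      rw [dif_pos i.2]
      show e ⟨(i:ℕ), i.2⟩ = a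
      have h3 : (⟨(i:ℕ), i.2⟩ : Fin s.card) = i := rfl
      rw [he, h3, hi]
      show ((s.equivFin.symm (s.equivFin ⟨a, ha⟩)) : Fin n) = a
      rw [Equiv.symm_apply_apply]
  have hfP : f ∈ P s := by
    rw [hP, Fintype.mem_piFinset]
    exact hfmem
  rw [step, ← Finset.sum_filter]
  have hnonempty : ((P s).filter (fun f => Finset.image f Finset.univ = s)).Nonempty :=
    ⟨f, Finset.mem_filter.2 ⟨hfP, hfsurj⟩⟩
  rw [Finset.sum_const, nsmul_eq_mul]
  apply mul_ne_zero
  · exact_mod_cast (Finset.card_pos.2 hnonempty).ne'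
  · exact pow_ne_zero _ (by norm_num)

/-- Let `X ∈ {0,1}^{n×2^n}` be the matrix whose `j`-th column is the vector of
binary digits of `j`, let `B ℓ` be the rows of `X`, and set `K = Xᵀ X`. Then for every positive
integer `d`, the column space of `K^∘d` equals the span of the Hadamard products
`B_{ℓ₁} ∘ ⋯ ∘ B_{ℓ_p}` over all `1 ≤ p ≤ d` and strictly increasing tuples `ℓ₁ < ⋯ < ℓ_p`
(equivalently, over all nonempty index sets `s` with at most `d` elements). -/
theorem columnSpace_hadamard_power_boolean_gram (n : ℕ)
    (X : Matrix (Fin n) (Fin (2 ^ n)) ℝ)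
    (hX : ∀ ℓ j, X ℓ j = if Nat.testBit (j : ℕ) (ℓ : ℕ) then 1 else 0)
    (B : Fin n → Fin (2 ^ n) → ℝ) (hB : ∀ ℓ j, B ℓ j = X ℓ j)
    (K : Matrix (Fin (2 ^ n)) (Fin (2 ^ n)) ℝ) (hK : K = X.transpose * X)
    (d : ℕ) (hd : 0 < d) :
    Submodule.span ℝ
        (Set.range fun j : Fin (2 ^ n) => fun i : Fin (2 ^ n) => (Matrix.of fun i' j' => K i' j' ^ d) i j) =
      Submodule.span ℝ
        {v : Fin (2 ^ n) → ℝ | ∃ s : Finset (Fin n), s.Nonempty ∧ s.card ≤ d ∧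
          v = fun j => ∏ ℓ ∈ s, B ℓ j} := by
  classical
  have hXval : ∀ ℓ j, X ℓ j = 0 ∨ X ℓ j = 1 := by
    intro ℓ j
    rw [hX]
    split <;> simp
  have hKij : ∀ i j, K i j = ∑ ℓ, X ℓ i * X ℓ j := by
    intro i j
    rw [hK]
    simp [Matrix.mul_apply, Matrix.transpose_apply]
  have hdne : Nonempty (Fin d) := ⟨⟨0, hd⟩⟩
  apply le_antisymm
  · -- columns of K^∘d are in the span of Hadamard products
    refine Submodule.span_le.2 ?_
    rintro _ ⟨j, rfl⟩
    have hcol : (fun i => (Matrix.of fun i' j' => K i' j' ^ d) i j)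
        = ∑ g ∈ Fintype.piFinset (fun _ : Fin d => (Finset.univ : Finset (Fin n))),
            (∏ ℓ ∈ Finset.image g Finset.univ, X ℓ j)
              • (fun i => ∏ ℓ ∈ Finset.image g Finset.univ, X ℓ i) := by
      funext i
      simp only [Matrix.of_apply, Finset.sum_apply, Pi.smul_apply, smul_eq_mul]
      rw [hKij]
      calc (∑ ℓ, X ℓ i * X ℓ j)^d
          = ∏ _k : Fin d, ∑ ℓ ∈ Finset.univ, X ℓ i * X ℓ j := by
            rw [Finset.prod_const, Finset.card_univ, Fintype.card_fin]
        _ = ∑ g ∈ Fintype.piFinset (fun _ : Fin d => (Finset.univ : Finset (Fin n))),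
              ∏ k, X (g k) i * X (g k) j := Finset.prod_univ_sum _ _
        _ = ∑ g ∈ Fintype.piFinset (fun _ : Fin d => (Finset.univ : Finset (Fin n))),
              (∏ ℓ ∈ Finset.image g Finset.univ, X ℓ j)
                * ∏ ℓ ∈ Finset.image g Finset.univ, X ℓ i := by
            refine Finset.sum_congr rfl fun g _ => ?_
            rw [idem_prod_comp (fun ℓ => X ℓ i * X ℓ j) (fun ℓ => by
              rcases hXval ℓ i with h | h <;> rcases hXval ℓ j with h' | h' <;>
                simp [h, h']) g]
            rw [Finset.prod_mul_distrib, mul_comm]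
    show (fun i => (Matrix.of fun i' j' => K i' j' ^ d) i j) ∈ _
    rw [hcol]
    refine Submodule.sum_mem _ fun g _ => Submodule.smul_mem _ _ (Submodule.subset_span ?_)
    refine ⟨Finset.image g Finset.univ, ?_, ?_, ?_⟩
    · exact Finset.image_nonempty.2 Finset.univ_nonempty
    · exact (Finset.card_image_le).trans (by simp)
    · funext j'
      exact Finset.prod_congr rfl fun ℓ _ => (hB ℓ j').symm
  · -- Hadamard products are in the column span
    refine Submodule.span_le.2 ?_
    rintro v ⟨s, hne, hcard, rfl⟩
    set J : Finset (Fin n) → Fin (2 ^ n) :=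
      fun t => finFunctionFinEquiv (fun ℓ => if ℓ ∈ t then (1 : Fin 2) else 0) with hJ
    have hXJ : ∀ (t : Finset (Fin n)) (ℓ : Fin n), X ℓ (J t) = if ℓ ∈ t then 1 else 0 := by
      intro t ℓ
      rw [hX]
      have h1 : (((J t : Fin (2^n)) : ℕ) / 2 ^ (ℓ:ℕ) % 2)
          = ((if ℓ ∈ t then (1 : Fin 2) else 0) : Fin 2).val := by
        have h2 : ((finFunctionFinEquiv.symm (J t)) ℓ : ℕ)
            = ((J t : Fin (2^n)) : ℕ) / 2 ^ (ℓ:ℕ) % 2 := by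
          simp [finFunctionFinEquiv]
        rw [← h2, hJ]
        rw [Equiv.symm_apply_apply]
      rw [Nat.testBit_eq_decide_div_mod_eq, h1]
      by_cases h : ℓ ∈ t <;> simp [h]
    have hKJ : ∀ i t, K i (J t) = ∑ ℓ ∈ t, X ℓ i := by
      intro i t
      rw [hKij i (J t)]
      calc ∑ ℓ, X ℓ i * X ℓ (J t)
          = ∑ ℓ, (if ℓ ∈ t then X ℓ i else 0) := by
            refine Finset.sum_congr rfl fun ℓ _ => ?_
            rw [hXJ]
            split <;> simp
        _ = ∑ ℓ ∈ Finset.univ ∩ t, X ℓ i := Finset.sum_ite_mem _ _ _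
        _ = ∑ ℓ ∈ t, X ℓ i := by rw [Finset.univ_inter]
    set c' : ℝ := ∑ t ∈ s.powerset, (-1:ℝ)^t.card * (t.card:ℝ)^d with hc'
    have hc0 : c' ≠ 0 := cprime_ne_zero hd s hne hcard
    have key : (fun j => ∏ ℓ ∈ s, B ℓ j)
        = c'⁻¹ • ∑ t ∈ s.powerset, (-1:ℝ)^t.card
            • (fun i => (Matrix.of fun i' j' => K i' j' ^ d) i (J t)) := by
      funext i
      simp only [Pi.smul_apply, Finset.sum_apply, smul_eq_mul, Matrix.of_apply]
      have hmain : ∑ t ∈ s.powerset, (-1:ℝ)^t.card * K i (J t) ^ d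
          = c' * ∏ ℓ ∈ s, X ℓ i := by
        calc ∑ t ∈ s.powerset, (-1:ℝ)^t.card * K i (J t) ^ d
            = ∑ t ∈ s.powerset, (-1:ℝ)^t.card * (∑ ℓ ∈ t, X ℓ i)^d := by
              refine Finset.sum_congr rfl fun t _ => by rw [hKJ]
          _ = c' * ∏ ℓ ∈ s, X ℓ i := diff_sum (fun ℓ => X ℓ i) (fun ℓ => hXval ℓ i) s
      rw [hmain, ← mul_assoc, inv_mul_cancel₀ hc0, one_mul]
      exact Finset.prod_congr rfl fun ℓ _ => hB ℓ i
    rw [key]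
    refine Submodule.smul_mem _ _ (Submodule.sum_mem _ fun t _ => ?_)
    exact Submodule.smul_mem _ _ (Submodule.subset_span ⟨J t, rfl⟩)
end

section
/- If S and T are finite multisets of prime numbers such that Σ_{p ∈ S} √p = Σ_{p ∈ T} √p (sums counted with multiplicity), then S = T. -/
/-!
If a prime `q ∉ P` divides `d` to an odd power, then `√d ∉ ℚ(√p : p ∈ P)`, by induction on the
finite set of primes `P`. Adjoining `√p` to a field `F ∌ √p` makes every element of the
extension `a + b√p` with `a, b ∈ F`. Squaring `√d = a + b√p` puts `√p` in `F` unless `a = 0` or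
`b = 0`, and in those cases `√(dp)` or `√d` already lies in `F`. Hence the `√p` are linearly
independent over `ℚ`, and equal sums force equal multiplicities.
-/

open Real

namespace Subfield

variable {K : Type*} [Field K] {F : Subfield K} {r : K}

theorem mul_self_sub_mul_ne_zero {a b : K} (ha : a ∈ F) (hb : b ∈ F) (hr : r ∉ F)
    (hx : a + b * r ≠ 0) : a * a - b * b * (r * r) ≠ 0 := by
  intro h
  have hb0 : b ≠ 0 := by
    rintro rfl
    simp_all
  have : r * r = (a / b) * (a / b) := by
    field_simp
    linear_combination -h
  rcases mul_self_eq_mul_self_iff.1 this with h | h <;> apply hr <;> rw [h]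
  · exact div_mem ha hb
  · exact neg_mem (div_mem ha hb)

theorem exists_add_mul_eq_of_mem_closure_insert (hr2 : r * r ∈ F) (hr : r ∉ F) {x : K}
    (hx : x ∈ closure (insert r (F : Set K))) : ∃ a ∈ F, ∃ b ∈ F, a + b * r = x := by
  let E : Subfield K :=
    { carrier := {x | ∃ a ∈ F, ∃ b ∈ F, a + b * r = x}
      one_mem' := ⟨1, F.one_mem, 0, F.zero_mem, by ring⟩
      zero_mem' := ⟨0, F.zero_mem, 0, F.zero_mem, by ring⟩
      add_mem' := by
        rintro _ _ ⟨a, ha, b, hb, rfl⟩ ⟨c, hc, d, hd, rfl⟩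
        exact ⟨a + c, add_mem ha hc, b + d, add_mem hb hd, by ring⟩
      neg_mem' := by
        rintro _ ⟨a, ha, b, hb, rfl⟩
        exact ⟨-a, neg_mem ha, -b, neg_mem hb, by ring⟩
      mul_mem' := by
        rintro _ _ ⟨a, ha, b, hb, rfl⟩ ⟨c, hc, d, hd, rfl⟩
        exact ⟨a * c + b * d * (r * r), add_mem (mul_mem ha hc) (mul_mem (mul_mem hb hd) hr2),
          a * d + b * c, add_mem (mul_mem ha hd) (mul_mem hb hc), by ring⟩
      inv_mem' := by
        rintro _ ⟨a, ha, b, hb, rfl⟩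
        by_cases hx : a + b * r = 0
        · exact ⟨0, F.zero_mem, 0, F.zero_mem, by simp [hx]⟩
        -- `(a + b r)⁻¹ = (a - b r) / (a² - b² r²)`
        have hN := mul_self_sub_mul_ne_zero ha hb hr hx
        have hNF : a * a - b * b * (r * r) ∈ F :=
          sub_mem (mul_mem ha ha) (mul_mem (mul_mem hb hb) hr2)
        refine ⟨a / (a * a - b * b * (r * r)), div_mem ha hNF,
          -b / (a * a - b * b * (r * r)), div_mem (neg_mem hb) hNF, ?_⟩
        refine eq_inv_of_mul_eq_one_left ?_
        rw [← div_self hN]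
        ring }
  have hsub : insert r (F : Set K) ⊆ E := by
    rintro y (rfl | hy)
    · exact ⟨0, F.zero_mem, 1, F.one_mem, by ring⟩
    · exact ⟨y, hy, 0, F.zero_mem, by ring⟩
  exact closure_le.2 hsub hx

end Subfield

noncomputable def sqrtSubfield (P : Finset ℕ) : Subfield ℝ :=
  Subfield.closure ((fun n : ℕ => √n) '' P)

theorem sqrt_mem_sqrtSubfield {P : Finset ℕ} {p : ℕ} (hp : p ∈ P) : √(p : ℝ) ∈ sqrtSubfield P :=
  Subfield.subset_closure ⟨p, hp, rfl⟩

theorem sqrtSubfield_insert_le (P : Finset ℕ) (p : ℕ) :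
    sqrtSubfield (insert p P) ≤ Subfield.closure (insert √(p : ℝ) (sqrtSubfield P)) := by
  rw [sqrtSubfield, Finset.coe_insert, Set.image_insert_eq]
  exact Subfield.closure_mono (Set.insert_subset_insert Subfield.subset_closure)

theorem not_isSquare_of_odd_padicValNat {q d : ℕ} [Fact q.Prime] (hd : Odd (padicValNat q d)) :
    ¬IsSquare d := by
  rintro ⟨k, rfl⟩
  have hk : k ≠ 0 := by rintro rfl; simp at hd
  rw [padicValNat.mul hk hk] at hd
  exact Nat.not_even_iff_odd.2 hd ⟨_, rfl⟩

theorem sqrt_notMem_sqrtSubfield {P : Finset ℕ} (hP : ∀ p ∈ P, p.Prime) {q d : ℕ}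
    (hq : q.Prime) (hqP : q ∉ P) (hd : Odd (padicValNat q d)) :
    √(d : ℝ) ∉ sqrtSubfield P := by
  induction P using Finset.induction_on generalizing q d with
  | empty =>
    have := Fact.mk hq
    rw [sqrtSubfield, Finset.coe_empty, Set.image_empty, Subfield.closure_empty]
    exact fun h => irrational_sqrt_natCast_iff.2 (not_isSquare_of_odd_padicValNat hd)
      (bot_le (a := (Rat.castHom ℝ).fieldRange) h)
  | insert p P hpP ih =>
    obtain ⟨hp, hP⟩ := Finset.forall_mem_insert _ _ _ |>.1 hP
    have := Fact.mk hp
    have := Fact.mk hq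
    replace ih := @ih hP
    have hqP' : q ∉ P := fun h => hqP (Finset.mem_insert_of_mem h)
    have hsqrtp : √(p : ℝ) ∉ sqrtSubfield P := ih hp hpP (by simp [padicValNat_self])
    have hp2 : √(p : ℝ) * √p = p := mul_self_sqrt (Nat.cast_nonneg p)
    intro hmem
    obtain ⟨a, ha, b, hb, hab⟩ := Subfield.exists_add_mul_eq_of_mem_closure_insert
      (by rw [hp2]; exact natCast_mem _ p) hsqrtp (sqrtSubfield_insert_le P p hmem)
    by_cases hb0 : b = 0
    · exact ih hq hqP' hd (by simpa [hb0, ← hab] using ha)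
    by_cases ha0 : a = 0
    · have hpq : p ≠ q := fun h => hqP (h ▸ Finset.mem_insert_self p P)
      have hd0 : d ≠ 0 := by rintro rfl; simp at hd
      refine ih hq hqP' (d := d * p) ?_ ?_
      · rwa [padicValNat.mul hd0 hp.ne_zero, padicValNat_primes hpq.symm, add_zero]
      · rw [Nat.cast_mul, sqrt_mul (Nat.cast_nonneg d), ← hab, ha0, zero_add, mul_assoc, hp2]
        exact mul_mem hb (natCast_mem _ p)
    · have hsq : √(p : ℝ) = (d - a * a - b * b * p) / (2 * a * b) := by
        rw [eq_div_iff (by simp [ha0, hb0]), ← mul_self_sqrt (Nat.cast_nonneg d), ← hab]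
        linear_combination (-b * b) * hp2
      refine hsqrtp (hsq ▸ div_mem (sub_mem (sub_mem (natCast_mem _ d) (mul_mem ha ha))
        (mul_mem (mul_mem hb hb) (natCast_mem _ p))) (mul_mem (mul_mem ?_ ha) hb))
      exact_mod_cast natCast_mem (sqrtSubfield P) 2

theorem linearIndepOn_sqrt_primes : LinearIndepOn ℚ (fun n : ℕ => √(n : ℝ)) {p | p.Prime} := by
  classical
  refine linearIndepOn_iff'.2 fun t g ht hsum q hq => by_contra fun hg => ?_
  have hqprime : q.Prime := ht hq
  have := Fact.mk hqprime
  refine sqrt_notMem_sqrtSubfield (fun p hp => ht (Finset.mem_of_mem_erase hp)) hqprime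
    (Finset.notMem_erase q t) (d := q) (by simp [padicValNat_self]) ?_
  rw [← Finset.add_sum_erase t _ hq] at hsum
  rw [← inv_smul_smul₀ hg √(q : ℝ), eq_neg_of_add_eq_zero_left hsum]
  exact SubfieldClass.qsmul_mem _ _
    (neg_mem (sum_mem fun p hp => SubfieldClass.qsmul_mem _ _ (sqrt_mem_sqrtSubfield hp)))

theorem Multiset.sum_map_eq_sum_count_smul {ι M : Type*} [DecidableEq ι] [AddCommMonoid M]
    (s : Multiset ι) (f : ι → M) {t : Finset ι} (h : s.toFinset ⊆ t) :
    (s.map f).sum = ∑ i ∈ t, s.count i • f i := by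
  rw [Finset.sum_multiset_map_count]
  exact Finset.sum_subset h fun i _ hi => by
    rw [Multiset.count_eq_zero.2 (by simpa using hi), zero_smul]

theorem LinearIndepOn.eq_of_multiset_sum_map_eq {ι R M : Type*} [Ring R] [CharZero R]
    [AddCommGroup M] [Module R M] {v : ι → M} {s : Set ι} (hv : LinearIndepOn R v s)
    {S T : Multiset ι} (hS : ∀ i ∈ S, i ∈ s) (hT : ∀ i ∈ T, i ∈ s)
    (h : (S.map v).sum = (T.map v).sum) : S = T := by
  classical
  set t := (S + T).toFinset
  have hsub : ∀ U ≤ S + T, (U.map v).sum = ∑ i ∈ t, (U.count i : R) • v i := fun U hU => by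
    simp only [Nat.cast_smul_eq_nsmul]
    exact U.sum_map_eq_sum_count_smul v (Multiset.toFinset_subset.2 (Multiset.subset_of_le hU))
  rw [hsub S (Multiset.le_add_right S T), hsub T (Multiset.le_add_left T S), ← sub_eq_zero,
    ← Finset.sum_sub_distrib] at h
  simp only [← sub_smul] at h
  have hts : (t : Set ι) ⊆ s := by
    simpa [t, Set.subset_def, or_imp, forall_and] using ⟨hS, hT⟩
  have hcount := linearIndepOn_iff'.1 hv t _ hts h
  ext i
  by_cases hi : i ∈ t
  · exact_mod_cast sub_eq_zero.1 (hcount i hi)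
  · simp only [t, Multiset.mem_toFinset, Multiset.mem_add, not_or] at hi
    rw [Multiset.count_eq_zero.2 hi.1, Multiset.count_eq_zero.2 hi.2]

/-- If `S` and `T` are finite multisets of prime numbers such that
`Σ_{p ∈ S} √p = Σ_{p ∈ T} √p` (with multiplicity), then `S = T`. -/
theorem multiset_primes_sqrt_sum_inj (S T : Multiset ℕ)
    (hS : ∀ p ∈ S, Nat.Prime p) (hT : ∀ p ∈ T, Nat.Prime p)
    (h : (S.map fun p => Real.sqrt p).sum = (T.map fun p => Real.sqrt p).sum) :
    S = T := by
  -- the statement coerces `S` and `T` to `Multiset ℝ` before mapping `√`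
  simp only [Multiset.pure_def, Multiset.bind_def, Multiset.bind_singleton, Multiset.map_map,
    Function.comp_def] at h
  exact linearIndepOn_sqrt_primes.eq_of_multiset_sum_map_eq hS hT h
end

section
/- Let m ≥ n ≥ 2. The set of matrices A ∈ ℝ^{n×m} for which H_A = ∪_{d≥1} H_A^d is not in general position is of the first category in the sense of Baire (i.e., meagre) in ℝ^{n×m}. -/
/-- The Hadamard product of the columns of `A` selected by the multiset `ℓ`. -/
noncomputable def hadamardColProd {n m : ℕ} (A : Matrix (Fin n) (Fin m) ℝ)
    (ℓ : Multiset (Fin m)) : Fin n → ℝ :=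
  (ℓ.map fun k => fun i => A i k).prod

/-- `H_A`: the set of all Hadamard products of a nonempty multiset of columns of `A`,
i.e. `∪_{d ≥ 1} H_A^d`. -/
noncomputable def hadamardColSetAll {n m : ℕ} (A : Matrix (Fin n) (Fin m) ℝ) :
    Set (Fin n → ℝ) :=
  {v | ∃ ℓ : Multiset (Fin m), ℓ ≠ 0 ∧ v = hadamardColProd A ℓ}

/-- A set `S ⊆ ℝ^n` is in general position if every subset of at most `n` elements is
linearly independent. -/
def InGeneralPosition {n : ℕ} (S : Set (Fin n → ℝ)) : Prop :=
  ∀ T : Finset (Fin n → ℝ), ↑T ⊆ S → T.card ≤ n →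
    LinearIndependent ℝ (fun v : T => (v : Fin n → ℝ))

/-!
If the Hadamard products indexed by an injective family `e` of `k ≤ n` multisets of columns are
linearly dependent, the `k × k` minor on their first `k` coordinates vanishes. That minor is a
polynomial, hence analytic, function of `A`, and it does not vanish identically: at the matrix
whose `l`-th column is `(1, p, p², …)` for the `l`-th prime `p`, the Hadamard products are the
Vandermonde rows of the integers `∏_{l ∈ e i} p_l`, which are distinct by unique factorization.
By the identity theorem its zero set is closed and nowhere dense, and the matrices in question
lie in the countable union of these zero sets over all such families.
-/

open Function

theorem AnalyticOnNhd.isNowhereDense_preimage_zero {𝕜 E F : Type*} [NontriviallyNormedField 𝕜]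
    [NormedAddCommGroup E] [NormedSpace 𝕜 E] [PreconnectedSpace E]
    [NormedAddCommGroup F] [NormedSpace 𝕜 F] {f : E → F} (hf : AnalyticOnNhd 𝕜 f Set.univ)
    {x : E} (hx : f x ≠ 0) : IsNowhereDense (f ⁻¹' {0}) := by
  have hclosed : IsClosed (f ⁻¹' {0}) := isClosed_singleton.preimage hf.continuous
  rw [hclosed.isNowhereDense_iff, Set.eq_empty_iff_forall_notMem]
  intro z hz
  have hzero : f =ᶠ[nhds z] 0 := mem_interior_iff_mem_nhds.mp hz
  exact hx (hf.eqOn_zero_of_preconnected_of_eventuallyEq_zero isPreconnected_univ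
    (Set.mem_univ z) hzero (Set.mem_univ x))

theorem analyticAt_multiset_prod_map {α 𝕜 E A : Type*} [NontriviallyNormedField 𝕜]
    [NormedAddCommGroup E] [NormedSpace 𝕜 E] [NormedCommRing A] [NormedAlgebra 𝕜 A]
    (s : Multiset α) {f : α → E → A} {x : E} (hf : ∀ a ∈ s, AnalyticAt 𝕜 (f a) x) :
    AnalyticAt 𝕜 (fun y => (s.map fun a => f a y).prod) x := by
  induction s using Multiset.induction with
  | empty => simpa using analyticAt_const
  | cons a s ih =>
    simp only [Multiset.map_cons, Multiset.prod_cons]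
    exact (hf a (Multiset.mem_cons_self a s)).mul
      (ih fun b hb => hf b (Multiset.mem_cons_of_mem hb))

theorem analyticAt_det {ι 𝕜 E : Type*} [Fintype ι] [DecidableEq ι] [NontriviallyNormedField 𝕜]
    [NormedAddCommGroup E] [NormedSpace 𝕜 E] {M : E → Matrix ι ι 𝕜} {x : E}
    (hM : ∀ i j, AnalyticAt 𝕜 (fun y => M y i j) x) : AnalyticAt 𝕜 (fun y => (M y).det) x := by
  simp only [Matrix.det_apply']
  fun_prop

theorem LinearIndependent.of_det_ne_zero {ι κ K : Type*} [Fintype ι] [DecidableEq ι] [Field K]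
    {v : ι → κ → K} {ρ : ι → κ} (h : (Matrix.of fun i j => v i (ρ j)).det ≠ 0) :
    LinearIndependent K v :=
  .of_comp (LinearMap.funLeft K K ρ) (Matrix.linearIndependent_rows_of_det_ne_zero h)

theorem multiset_prod_map_injective_of_prime {α : Type*} {P : α → ℕ} (hP : Injective P)
    (hprime : ∀ a, (P a).Prime) : Injective fun s : Multiset α => (s.map P).prod := by
  intro s t hst
  have hfactors : ∀ s : Multiset α,
      UniqueFactorizationMonoid.normalizedFactors (s.map P).prod = s.map P := fun s =>
    UniqueFactorizationMonoid.normalizedFactors_prod_of_prime fun p hp => by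
      obtain ⟨a, -, rfl⟩ := Multiset.mem_map.mp hp
      exact (hprime a).prime
  refine Multiset.map_injective hP ?_
  rw [← hfactors s, ← hfactors t]
  exact congrArg _ hst

theorem hadamardColProd_apply {n m : ℕ} (A : Matrix (Fin n) (Fin m) ℝ)
    (ℓ : Multiset (Fin m)) (i : Fin n) :
    hadamardColProd A ℓ i = (ℓ.map fun k => A i k).prod := by
  unfold hadamardColProd
  simpa [Multiset.map_map, comp_def] using
    map_multiset_prod (Pi.evalMonoidHom (fun _ => ℝ) i) (ℓ.map fun k i => A i k)

theorem analyticAt_hadamardColProd_apply {n m : ℕ} (ℓ : Multiset (Fin m)) (i : Fin n)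
    (A₀ : Fin n → Fin m → ℝ) :
    AnalyticAt ℝ (fun A : Fin n → Fin m → ℝ => hadamardColProd (Matrix.of A) ℓ i) A₀ := by
  simp only [hadamardColProd_apply, Matrix.of_apply]
  refine analyticAt_multiset_prod_map ℓ fun l _ => ?_
  exact ((ContinuousLinearMap.proj (R := ℝ) (φ := fun _ : Fin m => ℝ) l).comp
    (ContinuousLinearMap.proj (R := ℝ) (φ := fun _ : Fin n => Fin m → ℝ) i)).analyticAt A₀

theorem hadamardColProd_of_pow {n m : ℕ} (x : Fin m → ℝ) (ℓ : Multiset (Fin m)) (i : Fin n) :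
    hadamardColProd (Matrix.of fun i l => x l ^ (i : ℕ)) ℓ i = (ℓ.map x).prod ^ (i : ℕ) := by
  rw [hadamardColProd_apply, ← Multiset.prod_map_pow]
  rfl

theorem injective_prod_map_nth_prime (m : ℕ) :
    Injective fun ℓ : Multiset (Fin m) =>
      (ℓ.map fun l : Fin m => (Nat.nth Nat.Prime (l : ℕ) : ℝ)).prod := by
  intro s t hst
  have hcast : ∀ s : Multiset (Fin m),
      (s.map fun l : Fin m => (Nat.nth Nat.Prime (l : ℕ) : ℝ)).prod =
        ((s.map fun l : Fin m => Nat.nth Nat.Prime l).prod : ℕ) := fun s => by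
    rw [Nat.cast_multiset_prod, Multiset.map_map]
    rfl
  simp only [hcast, Nat.cast_inj] at hst
  exact multiset_prod_map_injective_of_prime
    ((Nat.nth_injective Nat.infinite_setOfPred_prime).comp Fin.val_injective)
    (fun l => Nat.prime_nth_prime l) hst

theorem isMeagre_not_linearIndependent_hadamardColProd {k n m : ℕ} (hk : k ≤ n)
    {e : Fin k → Multiset (Fin m)} (he : Injective e) :
    IsMeagre {A : Matrix (Fin n) (Fin m) ℝ |
      ¬ LinearIndependent ℝ fun i => hadamardColProd A (e i)} := by
  set minor : (Fin n → Fin m → ℝ) → ℝ :=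
    fun A => (Matrix.of fun i j => hadamardColProd (Matrix.of A) (e i) (Fin.castLE hk j)).det
  have hanalytic : AnalyticOnNhd ℝ minor Set.univ := fun A _ =>
    analyticAt_det fun i j => analyticAt_hadamardColProd_apply (e i) (Fin.castLE hk j) A
  set x : Fin m → ℝ := fun l => (Nat.nth Nat.Prime (l : ℕ) : ℝ)
  have hvandermonde : minor (fun i l => x l ^ (i : ℕ)) ≠ 0 := by
    convert Matrix.det_vandermonde_ne_zero_iff.mpr ((injective_prod_map_nth_prime m).comp he)
      using 2
    ext i j
    simp [hadamardColProd_of_pow, x]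
  refine (hanalytic.isNowhereDense_preimage_zero hvandermonde).isMeagre.mono fun A hA => ?_
  by_contra hminor
  exact hA (LinearIndependent.of_det_ne_zero hminor)

theorem exists_injective_not_linearIndependent_of_not_inGeneralPosition {n m : ℕ}
    {A : Matrix (Fin n) (Fin m) ℝ} (h : ¬ InGeneralPosition (hadamardColSetAll A)) :
    ∃ k ≤ n, ∃ e : Fin k → Multiset (Fin m),
      Injective e ∧ ¬ LinearIndependent ℝ fun i => hadamardColProd A (e i) := by
  simp only [InGeneralPosition, not_forall] at h
  obtain ⟨T, hTS, hTn, hdep⟩ := h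
  choose g _ hg using fun v : T => hTS v.2
  refine ⟨T.card, hTn, g ∘ T.equivFin.symm, ?_, fun hind => hdep ?_⟩
  · have hg_inj : Injective g := fun a b hab =>
      Subtype.ext ((hg a).trans ((congrArg _ hab).trans (hg b).symm))
    exact hg_inj.comp T.equivFin.symm.injective
  · have hfamily : (fun i => hadamardColProd A ((g ∘ T.equivFin.symm) i)) =
        (fun v : T => (v : Fin n → ℝ)) ∘ T.equivFin.symm :=
      funext fun i => (hg _).symm
    rwa [hfamily, linearIndependent_equiv] at hind

theorem isMeagre_not_general_position_general (n m : ℕ) :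
    IsMeagre {A : Matrix (Fin n) (Fin m) ℝ | ¬ InGeneralPosition (hadamardColSetAll A)} := by
  refine (isMeagre_iUnion fun k => isMeagre_iUnion fun hk : k ≤ n =>
    isMeagre_iUnion fun e => isMeagre_iUnion fun he : Injective e =>
      isMeagre_not_linearIndependent_hadamardColProd hk he).mono fun A hA => ?_
  obtain ⟨k, hk, e, he, hdep⟩ :=
    exists_injective_not_linearIndependent_of_not_inGeneralPosition hA
  simp only [Set.mem_iUnion]
  exact ⟨k, hk, e, he, hdep⟩

/-- For `m ≥ n ≥ 2`, the set of matrices `A ∈ ℝ^{n×m}` for which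
`H_A = ∪_{d≥1} H_A^d` is not in general position is meagre (of the first category in the sense
of Baire) in `ℝ^{n×m}`. -/
theorem isMeagre_not_general_position (n m : ℕ) (hn : 2 ≤ n) (hnm : n ≤ m) :
    IsMeagre {A : Matrix (Fin n) (Fin m) ℝ | ¬ InGeneralPosition (hadamardColSetAll A)} :=
  isMeagre_not_general_position_general n m
end

section
/- Let n, m, r be positive integers with r ≤ min{n, m}, and suppose that for each pair of dimensions, S_{n,r} is an open and dense subset of ℝ^{n×r} and S_{r,m} is an open and dense subset of ℝ^{r×m}. Then the set S_{n,r} · S_{r,m} = { C·D : C ∈ S_{n,r}, D ∈ S_{r,m} } is open and dense in M_r = { A ∈ ℝ^{n×m} : rank A = r }, where M_r carries the subspace topology inherited from ℝ^{n×m}. -/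
/-! If `A = C₀ D₀` has rank `r`, let `L` be a left inverse of `C₀` and `P` a right inverse of `D₀`.
The map `A ↦ (A P, (L A P)⁻¹ L A)` is continuous near `C₀ D₀`, sends it back to `(C₀, D₀)`, and is a
section of multiplication on rank-`r` matrices (Wedderburn's rank-reduction formula), so products of
factors close to `C₀` and `D₀` fill a neighbourhood of `A` in `M_r`. For density, write a rank-`r`
matrix as `C₀ D₀`: the pairs `(C, D)` with `C D` close to it and `L C D P` invertible form a
neighbourhood of `(C₀, D₀)`, which meets the dense set `S₁ × S₂`, and invertibility of `L C D P`
forces `rank (C D) = r`. -/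

open Module Filter Topology

theorem image_mem_nhdsWithin_of_continuousAt_section {X Y : Type*} [TopologicalSpace X]
    [TopologicalSpace Y] {f : X → Y} {g : Y → X} {t : Set Y} {y : Y} {U : Set X}
    (hg : ContinuousAt g y) (hfg : ∀ᶠ z in 𝓝[t] y, f (g z) = z) (hU : U ∈ 𝓝 (g y)) :
    f '' U ∈ 𝓝[t] y := by
  filter_upwards [hfg, nhdsWithin_le_nhds (hg.preimage_mem_nhds hU)] with z hz hzU
  exact ⟨g z, hzU, hz⟩

theorem LinearMap.toMatrix'_mulVecLin {R m n : Type*} [CommSemiring R] [Fintype n] [DecidableEq n]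
    (A : Matrix m n R) : LinearMap.toMatrix' A.mulVecLin = A := by
  rw [← Matrix.toLin'_apply', LinearMap.toMatrix'_toLin']

namespace Matrix

variable {K : Type*} [Field K] {l m n : Type*} [Fintype l] [Fintype m] [Fintype n]

theorem exists_mul_eq_one_of_rank_eq_card_height [DecidableEq l] [DecidableEq n]
    (D : Matrix l n K) (h : D.rank = Fintype.card l) : ∃ P : Matrix n l K, D * P = 1 := by
  have hsurj : LinearMap.range D.mulVecLin = ⊤ :=
    Submodule.eq_top_of_finrank_eq (by rw [finrank_fintype_fun_eq_card]; exact h)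
  obtain ⟨g, hg⟩ := D.mulVecLin.exists_rightInverse_of_surjective hsurj
  refine ⟨LinearMap.toMatrix' g, ?_⟩
  rw [← LinearMap.toMatrix'_mulVecLin D, ← LinearMap.toMatrix'_comp, hg, LinearMap.toMatrix'_id]

theorem exists_mul_eq_one_of_rank_eq_card_width [DecidableEq l] [DecidableEq m]
    (C : Matrix m l K) (h : C.rank = Fintype.card l) : ∃ L : Matrix l m K, L * C = 1 := by
  obtain ⟨P, hP⟩ := exists_mul_eq_one_of_rank_eq_card_height Cᵀ (by rwa [rank_transpose])
  exact ⟨Pᵀ, by rw [← transpose_transpose C, ← transpose_mul, hP, transpose_one]⟩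

omit [Fintype m] in
theorem exists_eq_mul_of_rank_eq_card [DecidableEq l] [DecidableEq n]
    (A : Matrix m n K) (h : A.rank = Fintype.card l) :
    ∃ (C : Matrix m l K) (D : Matrix l n K), A = C * D := by
  let e : LinearMap.range A.mulVecLin ≃ₗ[K] (l → K) :=
    LinearEquiv.ofFinrankEq _ _ (by rw [finrank_fintype_fun_eq_card]; exact h)
  refine ⟨LinearMap.toMatrix' ((LinearMap.range A.mulVecLin).subtype ∘ₗ e.symm.toLinearMap),
    LinearMap.toMatrix' (e.toLinearMap ∘ₗ A.mulVecLin.rangeRestrict), ?_⟩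
  rw [← LinearMap.toMatrix'_comp]
  conv_lhs => rw [← LinearMap.toMatrix'_mulVecLin A]
  congr 1
  refine LinearMap.ext fun x => ?_
  simp

theorem card_le_rank_of_isUnit_det_mul_mul [DecidableEq l] (A : Matrix m n K) (L : Matrix l m K)
    (P : Matrix n l K) (h : IsUnit (L * A * P).det) : Fintype.card l ≤ A.rank :=
  calc Fintype.card l = (L * A * P).rank :=
        (rank_of_isUnit _ ((isUnit_iff_isUnit_det _).mpr h)).symm
    _ ≤ (L * A).rank := rank_mul_le_left _ _
    _ ≤ A.rank := rank_mul_le_right _ _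

theorem exists_inverses_of_rank_mul_eq_card [DecidableEq l] [DecidableEq m] [DecidableEq n]
    (C : Matrix m l K) (D : Matrix l n K) (h : (C * D).rank = Fintype.card l) :
    ∃ (L : Matrix l m K) (P : Matrix n l K), L * C = 1 ∧ D * P = 1 := by
  obtain ⟨L, hL⟩ := exists_mul_eq_one_of_rank_eq_card_width C
    (le_antisymm (rank_le_card_width C) (h ▸ rank_mul_le_left C D))
  obtain ⟨P, hP⟩ := exists_mul_eq_one_of_rank_eq_card_height D
    (le_antisymm (rank_le_card_height D) (h ▸ rank_mul_le_right C D))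
  exact ⟨L, P, hL, hP⟩

theorem mul_mul_inv_mul_mul_eq_self [DecidableEq l] [DecidableEq n]
    (A : Matrix m n K) (hA : A.rank = Fintype.card l) (L : Matrix l m K) (P : Matrix n l K)
    (h : IsUnit (L * A * P).det) : A * P * ((L * A * P)⁻¹ * (L * A)) = A := by
  obtain ⟨C, D, rfl⟩ := exists_eq_mul_of_rank_eq_card (l := l) A hA
  have hLAP : L * (C * D) * P = (L * C) * (D * P) := by simp only [Matrix.mul_assoc]
  rw [hLAP, det_mul, IsUnit.mul_iff] at h
  rw [← Matrix.mul_assoc, hLAP, mul_inv_rev]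
  simp only [Matrix.mul_assoc, mul_nonsing_inv_cancel_left _ _ h.2]
  rw [← Matrix.mul_assoc L C D, nonsing_inv_mul_cancel_left _ _ h.1]

section Topology

variable [TopologicalSpace K] [IsTopologicalDivisionRing K]

theorem continuousAt_inv_of_isUnit_det [DecidableEq l] {M : Matrix l l K} (h : IsUnit M.det) :
    ContinuousAt Inv.inv M :=
  continuousAt_matrix_inv M (by
    simpa only [Ring.inverse_eq_inv'] using continuousAt_inv₀ (isUnit_iff_ne_zero.mp h))

variable [T1Space K]

theorem isOpen_setOf_isUnit_det [DecidableEq l] : IsOpen {M : Matrix l l K | IsUnit M.det} := by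
  simp only [isUnit_iff_ne_zero]
  exact isOpen_compl_singleton.preimage continuous_id.matrix_det

theorem exists_continuousAt_section_mul [DecidableEq l] [DecidableEq m] [DecidableEq n]
    (C₀ : Matrix m l K) (D₀ : Matrix l n K) (h : (C₀ * D₀).rank = Fintype.card l) :
    ∃ s : Matrix m n K → Matrix m l K × Matrix l n K, ContinuousAt s (C₀ * D₀) ∧
      s (C₀ * D₀) = (C₀, D₀) ∧
      ∀ᶠ A in 𝓝[{A | A.rank = Fintype.card l}] (C₀ * D₀), (s A).1 * (s A).2 = A := by
  obtain ⟨L, P, hL, hP⟩ := exists_inverses_of_rank_mul_eq_card C₀ D₀ h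
  have hLAP : Continuous fun A : Matrix m n K => L * A * P :=
    (continuous_const.matrix_mul continuous_id).matrix_mul continuous_const
  have hA₀ : L * (C₀ * D₀) * P = 1 := by
    rw [← Matrix.mul_assoc, hL, Matrix.one_mul, hP]
  have hunit : ∀ᶠ A in 𝓝 (C₀ * D₀), IsUnit (L * A * P).det :=
    (isOpen_setOf_isUnit_det.preimage hLAP).mem_nhds (by simp [hA₀])
  refine ⟨fun A => (A * P, (L * A * P)⁻¹ * (L * A)), ?_, ?_, ?_⟩
  · refine (continuous_id.matrix_mul continuous_const).continuousAt.prodMk ?_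
    refine (continuous_fst.matrix_mul continuous_snd).continuousAt.comp
      (f := fun A => ((L * A * P)⁻¹, L * A)) ?_
    exact ((continuousAt_inv_of_isUnit_det (by simp [hA₀])).comp hLAP.continuousAt).prodMk
      (continuous_const.matrix_mul continuous_id).continuousAt
  · dsimp only
    rw [hA₀, inv_one, Matrix.one_mul, ← Matrix.mul_assoc, hL, Matrix.one_mul, Matrix.mul_assoc, hP,
      Matrix.mul_one]
  · filter_upwards [self_mem_nhdsWithin, nhdsWithin_le_nhds hunit] with A hA hAu
    exact mul_mul_inv_mul_mul_eq_self A hA L P hAu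

theorem isOpen_setOf_rank_eq_mul_mem [DecidableEq l] [DecidableEq m] [DecidableEq n]
    {S₁ : Set (Matrix m l K)} {S₂ : Set (Matrix l n K)} (h₁ : IsOpen S₁) (h₂ : IsOpen S₂) :
    IsOpen {A : {A : Matrix m n K // A.rank = Fintype.card l} |
      ∃ C ∈ S₁, ∃ D ∈ S₂, (A : Matrix m n K) = C * D} := by
  rw [isOpen_iff_mem_nhds]
  rintro ⟨_, hA⟩ ⟨C₀, hC₀, D₀, hD₀, rfl⟩
  obtain ⟨s, hs, hs₀, hmul⟩ := exists_continuousAt_section_mul C₀ D₀ hA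
  have hprod : S₁ ×ˢ S₂ ∈ 𝓝 (s (C₀ * D₀)) :=
    hs₀ ▸ prod_mem_nhds (h₁.mem_nhds hC₀) (h₂.mem_nhds hD₀)
  have himage := image_mem_nhdsWithin_of_continuousAt_section (f := fun p => p.1 * p.2) hs hmul hprod
  refine mem_of_superset
    ((preimage_coe_mem_nhds_subtype (s := {A : Matrix m n K | A.rank = Fintype.card l})).mpr
      himage) ?_
  rintro A ⟨⟨C, D⟩, ⟨hC, hD⟩, hCD⟩
  exact ⟨C, hC, D, hD, hCD.symm⟩

theorem dense_setOf_rank_eq_mul_mem [DecidableEq l] [DecidableEq m] [DecidableEq n]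
    {S₁ : Set (Matrix m l K)} {S₂ : Set (Matrix l n K)} (h₁ : Dense S₁) (h₂ : Dense S₂) :
    Dense {A : {A : Matrix m n K // A.rank = Fintype.card l} |
      ∃ C ∈ S₁, ∃ D ∈ S₂, (A : Matrix m n K) = C * D} := by
  refine (Subtype.dense_iff (s := {A : Matrix m n K | A.rank = Fintype.card l})).mpr
    fun A₀ hA₀ => mem_closure_iff_nhds.mpr fun U hU => ?_
  obtain ⟨C₀, D₀, rfl⟩ := exists_eq_mul_of_rank_eq_card (l := l) A₀ hA₀
  obtain ⟨L, P, hL, hP⟩ := exists_inverses_of_rank_mul_eq_card C₀ D₀ hA₀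
  have hmul : Continuous fun p : Matrix m l K × Matrix l n K => p.1 * p.2 :=
    continuous_fst.matrix_mul continuous_snd
  have hLAP : Continuous fun p : Matrix m l K × Matrix l n K => L * (p.1 * p.2) * P :=
    (continuous_const.matrix_mul hmul).matrix_mul continuous_const
  have hA₀ : L * (C₀ * D₀) * P = 1 := by
    rw [← Matrix.mul_assoc, hL, Matrix.one_mul, hP]
  have hO : {p : Matrix m l K × Matrix l n K |
      p.1 * p.2 ∈ U ∧ IsUnit (L * (p.1 * p.2) * P).det} ∈ 𝓝 (C₀, D₀) :=
    inter_mem (hmul.continuousAt.preimage_mem_nhds hU)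
      ((isOpen_setOf_isUnit_det.preimage hLAP).mem_nhds (by simp [hA₀]))
  obtain ⟨⟨C, D⟩, ⟨hC, hD⟩, hCDU, hunit⟩ := (h₁.prod h₂).inter_nhds_nonempty hO
  have hrank : (C * D).rank = Fintype.card l :=
    le_antisymm ((rank_mul_le_left C D).trans (rank_le_card_width C))
      (card_le_rank_of_isUnit_det_mul_mul _ L P hunit)
  exact ⟨C * D, hCDU, ⟨C * D, hrank⟩, ⟨C, hC, D, hD, rfl⟩, rfl⟩

end Topology

end Matrix

theorem product_of_open_dense_factor_sets_general (n m r : ℕ)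
    (S₁ : Set (Matrix (Fin n) (Fin r) ℝ)) (S₂ : Set (Matrix (Fin r) (Fin m) ℝ))
    (hS₁o : IsOpen S₁) (hS₁d : Dense S₁) (hS₂o : IsOpen S₂) (hS₂d : Dense S₂) :
    IsOpen {A : {A : Matrix (Fin n) (Fin m) ℝ // A.rank = r} |
        ∃ C ∈ S₁, ∃ D ∈ S₂, (A : Matrix (Fin n) (Fin m) ℝ) = C * D} ∧
    Dense {A : {A : Matrix (Fin n) (Fin m) ℝ // A.rank = r} |
        ∃ C ∈ S₁, ∃ D ∈ S₂, (A : Matrix (Fin n) (Fin m) ℝ) = C * D} := by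
  have hopen := Matrix.isOpen_setOf_rank_eq_mul_mem (n := Fin m) hS₁o hS₂o
  have hdense := Matrix.dense_setOf_rank_eq_mul_mem (n := Fin m) hS₁d hS₂d
  rw [Fintype.card_fin] at hopen hdense
  exact ⟨hopen, hdense⟩

/-- Let `r ≤ min{n,m}`, let `S₁` be an open dense subset of `ℝ^{n×r}` and `S₂`
an open dense subset of `ℝ^{r×m}`. Then `S₁ · S₂ = { C·D : C ∈ S₁, D ∈ S₂ }` is open and dense
in `M_r = { A ∈ ℝ^{n×m} : rank A = r }` with the subspace topology. -/
theorem product_of_open_dense_factor_sets (n m r : ℕ)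
    (hn : 0 < n) (hm : 0 < m) (hr : 0 < r) (hrn : r ≤ n) (hrm : r ≤ m)
    (S₁ : Set (Matrix (Fin n) (Fin r) ℝ)) (S₂ : Set (Matrix (Fin r) (Fin m) ℝ))
    (hS₁o : IsOpen S₁) (hS₁d : Dense S₁) (hS₂o : IsOpen S₂) (hS₂d : Dense S₂) :
    IsOpen {A : {A : Matrix (Fin n) (Fin m) ℝ // A.rank = r} |
        ∃ C ∈ S₁, ∃ D ∈ S₂, (A : Matrix (Fin n) (Fin m) ℝ) = C * D} ∧
    Dense {A : {A : Matrix (Fin n) (Fin m) ℝ // A.rank = r} |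
        ∃ C ∈ S₁, ∃ D ∈ S₂, (A : Matrix (Fin n) (Fin m) ℝ) = C * D} :=
  product_of_open_dense_factor_sets_general n m r S₁ S₂ hS₁o hS₁d hS₂o hS₂d
end

section
/- Let x_1, …, x_m ∈ ℝ^n, let y_1, …, y_m ∈ {−1, 1}, let d be a positive integer, and let σ(z) = 1 for z ≥ 0 and σ(z) = −1 for z < 0. Then the following are equivalent: (i) there exist α_1, …, α_m ∈ ℝ and b ∈ ℝ such that σ( Σ_{i=1}^m α_i y_i ⟨x_i, x_j⟩^d + b ) = y_j for all j = 1, …, m; (ii) the constrained maximization problem max over a ∈ ℝ^m of ( ‖a‖_1 − (1/2) Σ_{i,j=1}^m a_i a_j y_i y_j ⟨x_i, x_j⟩^d ) subject to Σ_{i=1}^m y_i a_i = 0 and a_1, …, a_m ≥ 0 attains its supremum at some feasible a. -/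
namespace KPAux

variable {n m d : ℕ}

def ipF {d n : ℕ} (w v : (Fin d → Fin n) → ℝ) : ℝ := ∑ f, w f * v f

def phiF (d : ℕ) (x : Fin n → ℝ) : (Fin d → Fin n) → ℝ := fun f => ∏ t, x (f t)

lemma ipF_comm (w v : (Fin d → Fin n) → ℝ) : ipF w v = ipF v w := by
  simp [ipF, mul_comm]

lemma ipF_self_nonneg (w : (Fin d → Fin n) → ℝ) : 0 ≤ ipF w w :=
  Finset.sum_nonneg fun f _ => mul_self_nonneg _

lemma kernel_eq (x x' : Fin n → ℝ) :
    (∑ k, x k * x' k) ^ d = ipF (phiF d x) (phiF d x') := by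
  rw [show (∑ k, x k * x' k) ^ d = ∏ _t : Fin d, (∑ k, x k * x' k) by
    simp [Finset.prod_const]]
  rw [Finset.prod_univ_sum]
  simp [ipF, phiF, Finset.prod_mul_distrib]

lemma ipF_sum_left (c : Fin m → ℝ) (v : Fin m → (Fin d → Fin n) → ℝ)
    (w : (Fin d → Fin n) → ℝ) :
    ipF (fun f => ∑ i, c i * v i f) w = ∑ i, c i * ipF (v i) w := by
  unfold ipF
  beta_reduce
  simp_rw [Finset.sum_mul, mul_assoc]
  rw [Finset.sum_comm]
  simp_rw [← Finset.mul_sum]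

lemma ipF_sum_right (c : Fin m → ℝ) (v : Fin m → (Fin d → Fin n) → ℝ)
    (w : (Fin d → Fin n) → ℝ) :
    ipF w (fun f => ∑ i, c i * v i f) = ∑ i, c i * ipF w (v i) := by
  rw [ipF_comm, ipF_sum_left]
  simp_rw [ipF_comm w]

lemma ipF_expand (t : ℝ) (p q : (Fin d → Fin n) → ℝ) :
    ipF (fun f => p f + t * q f) (fun f => p f + t * q f)
      = ipF p p + 2 * t * ipF p q + t ^ 2 * ipF q q := by
  unfold ipF
  simp_rw [show ∀ f, (p f + t * q f) * (p f + t * q f)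
      = p f * p f + (2 * t) * (p f * q f) + t ^ 2 * (q f * q f) from fun f => by ring]
  simp [Finset.sum_add_distrib, Finset.mul_sum]

lemma ipF_quad (t : ℝ) (w u : (Fin d → Fin n) → ℝ) :
    2 * t * ipF w u ≤ t ^ 2 * ipF w w + ipF u u := by
  have h := ipF_self_nonneg (fun f => (-t) * w f + u f)
  have he : ipF (fun f => (-t) * w f + u f) (fun f => (-t) * w f + u f)
      = t ^ 2 * ipF w w - 2 * t * ipF w u + ipF u u := by
    unfold ipF
    simp_rw [show ∀ f, ((-t) * w f + u f) * ((-t) * w f + u f)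
        = t ^ 2 * (w f * w f) - (2 * t) * (w f * u f) + u f * u f from fun f => by ring]
    simp [Finset.sum_add_distrib, Finset.sum_sub_distrib, Finset.mul_sum]
  rw [he] at h
  linarith

lemma ipF_sub_right (w p q : (Fin d → Fin n) → ℝ) :
    ipF w (fun f => p f - q f) = ipF w p - ipF w q := by
  simp [ipF, mul_sub, Finset.sum_sub_distrib]

/-- the vector `Σ_i c_i y_i φ(x_i)` in feature space -/
def uvec (d : ℕ) (x : Fin m → Fin n → ℝ) (y : Fin m → ℝ) (c : Fin m → ℝ) :
    (Fin d → Fin n) → ℝ :=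
  fun f => ∑ i, c i * y i * phiF d (x i) f

lemma lin_eq (x : Fin m → Fin n → ℝ) (y : Fin m → ℝ) (c : Fin m → ℝ) (j : Fin m) :
    ∑ i, c i * y i * (∑ k, x i k * x j k) ^ d
      = ipF (uvec d x y c) (phiF d (x j)) := by
  unfold uvec
  rw [show (fun f => ∑ i, c i * y i * phiF d (x i) f)
      = (fun f => ∑ i, (c i * y i) * phiF d (x i) f) from rfl]
  rw [ipF_sum_left]
  exact Finset.sum_congr rfl fun i _ => by rw [kernel_eq]

lemma dval_eq (x : Fin m → Fin n → ℝ) (y : Fin m → ℝ) (c : Fin m → ℝ) :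
    ∑ i, ∑ j, c i * c j * y i * y j * (∑ k, x i k * x j k) ^ d
      = ipF (uvec d x y c) (uvec d x y c) := by
  unfold uvec
  rw [show (fun f => ∑ i, c i * y i * phiF d (x i) f)
      = (fun f => ∑ i, (c i * y i) * phiF d (x i) f) from rfl]
  rw [ipF_sum_left]
  refine Finset.sum_congr rfl fun i _ => ?_
  rw [ipF_comm, ipF_sum_left]
  rw [Finset.mul_sum]
  refine Finset.sum_congr rfl fun j _ => ?_
  rw [kernel_eq, ipF_comm (phiF d (x j))]
  ring

/-- the dual objective -/
noncomputable def objF (x : Fin m → Fin n → ℝ) (y : Fin m → ℝ) (d : ℕ) (a : Fin m → ℝ) : ℝ :=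
  (∑ i, |a i|) - (1 / 2) * ∑ i, ∑ j, a i * a j * y i * y j * (∑ k, x i k * x j k) ^ d

lemma objF_eq (x : Fin m → Fin n → ℝ) (y : Fin m → ℝ) (a : Fin m → ℝ)
    (hnn : ∀ i, 0 ≤ a i) :
    objF x y d a = (∑ i, a i) - (1 / 2) * ipF (uvec d x y a) (uvec d x y a) := by
  unfold objF
  rw [dval_eq]
  congr 1
  exact Finset.sum_congr rfl fun i _ => abs_of_nonneg (hnn i)


lemma objF_cont (x : Fin m → Fin n → ℝ) (y : Fin m → ℝ) (d : ℕ) :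
    Continuous (objF x y d) := by
  unfold objF
  apply Continuous.sub
  · exact continuous_finset_sum _ fun i _ => (continuous_apply i).abs
  · apply Continuous.mul continuous_const
    refine continuous_finset_sum _ fun i _ => continuous_finset_sum _ fun j _ => ?_
    exact ((((continuous_apply i).mul (continuous_apply j)).mul continuous_const).mul
      continuous_const).mul continuous_const

lemma attained_of_margin (x : Fin m → Fin n → ℝ) (y : Fin m → ℝ)
    (w : (Fin d → Fin n) → ℝ) (b' : ℝ)
    (hmargin : ∀ j, 1 ≤ y j * (ipF w (phiF d (x j)) + b')) :
    ∃ a : Fin m → ℝ,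
      ((∑ i, y i * a i = 0) ∧ ∀ i, 0 ≤ a i) ∧
      ∀ a' : Fin m → ℝ, ((∑ i, y i * a' i = 0) ∧ ∀ i, 0 ≤ a' i) →
        objF x y d a' ≤ objF x y d a := by
  classical
  -- key estimates for feasible points
  have hlin : ∀ a : Fin m → ℝ, (∑ i, y i * a i = 0) → (∀ i, 0 ≤ a i) →
      (∑ i, a i) ≤ ipF w (uvec d x y a) := by
    intro a h0 hnn
    have h1 : (∑ i, a i) ≤ ∑ i, a i * (y i * (ipF w (phiF d (x i)) + b')) := by
      refine Finset.sum_le_sum fun i _ => ?_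
      calc a i = a i * 1 := by ring
        _ ≤ a i * (y i * (ipF w (phiF d (x i)) + b')) :=
          mul_le_mul_of_nonneg_left (hmargin i) (hnn i)
    have h2 : ∑ i, a i * (y i * (ipF w (phiF d (x i)) + b'))
        = (∑ i, (a i * y i) * ipF w (phiF d (x i))) + b' * ∑ i, y i * a i := by
      rw [Finset.mul_sum, ← Finset.sum_add_distrib]
      exact Finset.sum_congr rfl fun i _ => by ring
    have h3 : ipF w (uvec d x y a) = ∑ i, (a i * y i) * ipF w (phiF d (x i)) := by
      unfold uvec
      rw [show (fun f => ∑ i, a i * y i * phiF d (x i) f)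
          = (fun f => ∑ i, (a i * y i) * phiF d (x i) f) from rfl]
      rw [ipF_sum_right]
    rw [h3]
    rw [h2, h0] at h1
    linarith
  -- bound on feasible points with nonnegative objective value
  set B : ℝ := 2 * ipF w w with hB
  have hbound : ∀ a : Fin m → ℝ, (∑ i, y i * a i = 0) → (∀ i, 0 ≤ a i) →
      0 ≤ objF x y d a → (∑ i, a i) ≤ B := by
    intro a h0 hnn hpos
    set u := uvec d x y a
    have hq2 := ipF_quad 2 w u
    have hl := hlin a h0 hnn
    rw [objF_eq x y a hnn] at hpos
    have huu : 0 ≤ ipF u u := ipF_self_nonneg u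
    nlinarith [hq2, hl, hpos, huu]
  -- the truncated feasible set is compact
  set S : Set (Fin m → ℝ) :=
    {a | (∑ i, y i * a i = 0) ∧ (∀ i, 0 ≤ a i) ∧ 0 ≤ objF x y d a} with hS
  have hSclosed : IsClosed S := by
    have h1 : IsClosed {a : Fin m → ℝ | ∑ i, y i * a i = 0} :=
      isClosed_eq (continuous_finset_sum _ fun i _ =>
        (continuous_const.mul (continuous_apply i))) continuous_const
    have h2 : IsClosed {a : Fin m → ℝ | ∀ i, 0 ≤ a i} := by
      have : {a : Fin m → ℝ | ∀ i, 0 ≤ a i} = ⋂ i, {a : Fin m → ℝ | 0 ≤ a i} := by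
        ext a; simp
      rw [this]
      exact isClosed_iInter fun i => isClosed_le continuous_const (continuous_apply i)
    have h3 : IsClosed {a : Fin m → ℝ | 0 ≤ objF x y d a} :=
      isClosed_le continuous_const (objF_cont x y d)
    have : S = {a : Fin m → ℝ | ∑ i, y i * a i = 0} ∩
        ({a : Fin m → ℝ | ∀ i, 0 ≤ a i} ∩ {a : Fin m → ℝ | 0 ≤ objF x y d a}) := by
      ext a; simp [hS, Set.mem_setOf_eq, and_assoc]
    rw [this]
    exact h1.inter (h2.inter h3)
  have hSsub : S ⊆ Set.Icc (0 : Fin m → ℝ) (fun _ => B) := by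
    rintro a ⟨h0, hnn, hpos⟩
    constructor
    · intro i; exact hnn i
    · intro i
      calc a i ≤ ∑ j, a j := Finset.single_le_sum (fun j _ => hnn j) (Finset.mem_univ i)
        _ ≤ B := hbound a h0 hnn hpos
  have hScompact : IsCompact S := (isCompact_Icc).of_isClosed_subset hSclosed hSsub
  have h0G : objF x y d 0 = 0 := by
    simp [objF]
  have h0S : (0 : Fin m → ℝ) ∈ S := by
    refine ⟨by simp, fun i => le_refl 0, by rw [h0G]⟩
  obtain ⟨a, haS, hmax⟩ := hScompact.exists_isMaxOn ⟨0, h0S⟩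
    ((objF_cont x y d).continuousOn)
  obtain ⟨ha0, hann, hapos⟩ := haS
  refine ⟨a, ⟨ha0, hann⟩, fun a' ⟨h0', hnn'⟩ => ?_⟩
  by_cases hcase : 0 ≤ objF x y d a'
  · exact hmax ⟨h0', hnn', hcase⟩
  · have : objF x y d 0 ≤ objF x y d a := hmax h0S
    rw [h0G] at this
    linarith


lemma gap_of_max (x : Fin m → Fin n → ℝ) (y : Fin m → ℝ) (a : Fin m → ℝ)
    (h0 : ∑ i, y i * a i = 0) (hnn : ∀ i, 0 ≤ a i)
    (hmax : ∀ a' : Fin m → ℝ, ((∑ i, y i * a' i = 0) ∧ ∀ i, 0 ≤ a' i) →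
      objF x y d a' ≤ objF x y d a)
    (i j : Fin m) (hyi : y i = 1) (hyj : y j = -1) :
    2 ≤ ipF (uvec d x y a) (phiF d (x i)) - ipF (uvec d x y a) (phiF d (x j)) := by
  classical
  have hij : i ≠ j := by
    intro h; rw [h, hyj] at hyi; norm_num at hyi
  set w := uvec d x y a with hw
  set p := phiF d (x i) with hp
  set q := phiF d (x j) with hq
  by_contra hlt
  push_neg at hlt
  set c : ℝ := ipF w p - ipF w q with hc
  set δ : (Fin d → Fin n) → ℝ := fun f => p f - q f with hδ
  have hδc : ipF w δ = c := by rw [hδ, ipF_sub_right]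
  set Q : ℝ := ipF δ δ with hQ
  have hQ0 : 0 ≤ Q := ipF_self_nonneg δ
  set t : ℝ := (2 - c) / (Q + 1) with ht
  have ht0 : 0 < t := div_pos (by linarith) (by linarith)
  set a' : Fin m → ℝ := fun k => a k + (if k = i then t else 0) + (if k = j then t else 0)
    with ha'
  clear_value a' t Q δ c q p w
  have hfeas0 : ∑ k, y k * a' k = 0 := by
    simp only [ha', mul_add, Finset.sum_add_distrib, mul_ite, mul_zero,
      Finset.sum_ite_eq', Finset.mem_univ, if_true, hyi, hyj, h0]
    ring
  have hfeasnn : ∀ k, 0 ≤ a' k := by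
    intro k
    simp only [ha']
    have := hnn k
    split_ifs <;> linarith
  -- sum of a'
  have hsum' : ∑ k, a' k = (∑ k, a k) + 2 * t := by
    simp only [ha', Finset.sum_add_distrib, Finset.sum_ite_eq', Finset.mem_univ, if_true]
    ring
  -- uvec of a'
  have huvec' : uvec d x y a' = fun f => w f + t * δ f := by
    funext f
    simp only [uvec, ha', hδ, hw]
    rw [hp, hq]
    have hterm : ∀ k, ((a k + if k = i then t else 0) + if k = j then t else 0) * y k
          * phiF d (x k) f
        = a k * y k * phiF d (x k) f + (if k = i then t * (y k * phiF d (x k) f) else 0)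
          + (if k = j then t * (y k * phiF d (x k) f) else 0) := by
      intro k; split_ifs <;> ring
    simp_rw [hterm]
    simp only [Finset.sum_add_distrib, Finset.sum_ite_eq', Finset.mem_univ, if_true,
      hyi, hyj]
    ring
  have hobj' : objF x y d a' = objF x y d a + (2 * t - t * c - t ^ 2 / 2 * Q) := by
    rw [objF_eq x y a' hfeasnn, objF_eq x y a hnn, hsum', huvec', ipF_expand, hδc]
    rw [← hw, ← hQ]
    ring
  have hle := hmax a' ⟨hfeas0, hfeasnn⟩
  rw [hobj'] at hle
  have hkey : 2 * t - t * c - t ^ 2 / 2 * Q ≤ 0 := by linarith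
  have htQ : t * (Q + 1) = 2 - c := by
    rw [ht]; field_simp
  nlinarith [hkey, htQ, ht0, hQ0, mul_pos ht0 ht0]

end KPAux


open KPAux


/-- The activation function: `σ(z) = 1` for `z ≥ 0` and `σ(z) = −1` for `z < 0`. -/
noncomputable def perceptronSign (z : ℝ) : ℝ := if 0 ≤ z then 1 else -1

/-- Let `x₁, …, x_m ∈ ℝ^n`, labels `y_i ∈ {−1,1}`, `d` a positive integer. The
classification task is solvable by a polynomial kernel perceptron of degree `d` (i.e. there are
`α ∈ ℝ^m`, `b ∈ ℝ` with `σ(Σ_i α_i y_i ⟨x_i,x_j⟩^d + b) = y_j` for all `j`) if and only if the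
constrained maximization problem
`max_a ( ‖a‖₁ − ½ Σ_{i,j} a_i a_j y_i y_j ⟨x_i,x_j⟩^d )` subject to `Σ_i y_i a_i = 0`, `a ≥ 0`
attains its supremum at some feasible `a`. -/
theorem kernel_perceptron_iff_dual_attained (n m : ℕ)
    (x : Fin m → Fin n → ℝ) (y : Fin m → ℝ) (hy : ∀ i, y i = 1 ∨ y i = -1)
    (d : ℕ) (hd : 0 < d) :
    (∃ α : Fin m → ℝ, ∃ b : ℝ, ∀ j : Fin m,
        perceptronSign (∑ i, α i * y i * (∑ k, x i k * x j k) ^ d + b) = y j) ↔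
    (∃ a : Fin m → ℝ,
        ((∑ i, y i * a i = 0) ∧ ∀ i, 0 ≤ a i) ∧
        ∀ a' : Fin m → ℝ, ((∑ i, y i * a' i = 0) ∧ ∀ i, 0 ≤ a' i) →
          (∑ i, |a' i|) - (1 / 2) * ∑ i, ∑ j, a' i * a' j * y i * y j * (∑ k, x i k * x j k) ^ d ≤
          (∑ i, |a i|) - (1 / 2) * ∑ i, ∑ j, a i * a j * y i * y j * (∑ k, x i k * x j k) ^ d) := by
  classical
  constructor
  · -- separable → dual attained
    rintro ⟨α, b, hαb⟩
    -- translate the sign conditions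
    have hz1 : ∀ j, y j = 1 → 0 ≤ ipF (uvec d x y α) (phiF d (x j)) + b := by
      intro j hj
      by_contra hneg
      push_neg at hneg
      have := hαb j
      rw [lin_eq x y α j] at this
      unfold perceptronSign at this
      rw [if_neg (by linarith)] at this
      rw [hj] at this; norm_num at this
    have hz2 : ∀ j, y j = -1 → ipF (uvec d x y α) (phiF d (x j)) + b < 0 := by
      intro j hj
      by_contra hneg
      push_neg at hneg
      have := hαb j
      rw [lin_eq x y α j] at this
      unfold perceptronSign at this
      rw [if_pos hneg] at this
      rw [hj] at this; norm_num at this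
    -- construct a margin separator
    have hmargin : ∃ w : (Fin d → Fin n) → ℝ, ∃ b' : ℝ,
        ∀ j, 1 ≤ y j * (ipF w (phiF d (x j)) + b') := by
      by_cases hN : ∃ j, y j = -1
      · by_cases hP : ∃ j, y j = 1
        swap
        · -- no positive labels
          refine ⟨fun _ => 0, -1, fun j => ?_⟩
          have hj : y j = -1 := (hy j).resolve_left (fun h => hP ⟨j, h⟩)
          simp [ipF, hj]
        · -- both classes present
          obtain ⟨j₀, hj₀⟩ := hN
          set w₀ := uvec d x y α with hw₀
          set Nf : Finset (Fin m) := Finset.univ.filter (fun j => y j = -1) with hNf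
          have hNne : Nf.Nonempty := ⟨j₀, by simp [hNf, hj₀]⟩
          set ε : ℝ := Nf.inf' hNne (fun j => -(ipF w₀ (phiF d (x j)) + b)) with hε
          have hε0 : 0 < ε := by
            rw [hε, Finset.lt_inf'_iff]
            intro j hj
            have : y j = -1 := by simpa [hNf] using hj
            have := hz2 j this
            linarith
          refine ⟨fun f => (2 / ε) * w₀ f, (2 / ε) * (b + ε / 2), fun j => ?_⟩
          have hipr : ipF (fun f => (2 / ε) * w₀ f) (phiF d (x j))
              = (2 / ε) * ipF w₀ (phiF d (x j)) := by
            simp [ipF, Finset.mul_sum, mul_assoc]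
          rw [hipr]
          have h2ε : 0 < 2 / ε := by positivity
          rcases hy j with hj | hj
          · have h1 := hz1 j hj
            rw [hj, one_mul]
            have : (2 / ε) * (ε / 2) ≤ (2 / ε) * (ipF w₀ (phiF d (x j)) + b) + (2/ε) * (ε/2) := by
              nlinarith
            calc (1 : ℝ) = (2 / ε) * (ε / 2) := by field_simp
              _ ≤ _ := by linarith
          · have hjN : j ∈ Nf := by simp [hNf, hj]
            have h2 : ε ≤ -(ipF w₀ (phiF d (x j)) + b) :=
              Finset.inf'_le (fun j => -(ipF w₀ (phiF d (x j)) + b)) hjN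
            rw [hj]
            have key : (2 / ε) * (ipF w₀ (phiF d (x j)) + b) + (2/ε) * (ε/2) ≤ -1 := by
              have : (2 / ε) * (ipF w₀ (phiF d (x j)) + b + ε / 2) ≤ (2 / ε) * (-(ε/2)) := by
                apply mul_le_mul_of_nonneg_left _ (le_of_lt h2ε)
                linarith
              have h2' : (2 / ε) * (-(ε/2)) = -1 := by field_simp
              nlinarith [this]
            linarith
      · -- no negative labels
        refine ⟨fun _ => 0, 1, fun j => ?_⟩
        have hj : y j = 1 := (hy j).resolve_right (fun h => hN ⟨j, h⟩)
        simp [ipF, hj]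
    obtain ⟨w, b', hwb⟩ := hmargin
    obtain ⟨a, hfeas, hmax⟩ := attained_of_margin x y w b' hwb
    exact ⟨a, hfeas, fun a' h' => hmax a' h'⟩
  · -- dual attained → separable
    rintro ⟨a, ⟨h0, hnn⟩, hmax⟩
    have hmax' : ∀ a' : Fin m → ℝ, ((∑ i, y i * a' i = 0) ∧ ∀ i, 0 ≤ a' i) →
        objF x y d a' ≤ objF x y d a := fun a' h' => hmax a' h'
    by_cases hP : ∃ j, y j = 1
    · by_cases hN : ∃ j, y j = -1
      · -- both classes present: use the maximizer
        set w := uvec d x y a with hw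
        set Pf : Finset (Fin m) := Finset.univ.filter (fun j => y j = 1) with hPf
        set Nf : Finset (Fin m) := Finset.univ.filter (fun j => y j = -1) with hNf
        obtain ⟨i₀, hi₀⟩ := hP
        obtain ⟨j₀, hj₀⟩ := hN
        have hPne : Pf.Nonempty := ⟨i₀, by simp [hPf, hi₀]⟩
        have hNne : Nf.Nonempty := ⟨j₀, by simp [hNf, hj₀]⟩
        set Pm : ℝ := Pf.inf' hPne (fun i => ipF w (phiF d (x i))) with hPm
        set Nm : ℝ := Nf.sup' hNne (fun i => ipF w (phiF d (x i))) with hNm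
        have hgap : Nm + 2 ≤ Pm := by
          obtain ⟨i₁, hi₁, hPmv⟩ := Finset.exists_mem_eq_inf' hPne (fun i => ipF w (phiF d (x i)))
          obtain ⟨j₁, hj₁, hNmv⟩ := Finset.exists_mem_eq_sup' hNne (fun i => ipF w (phiF d (x i)))
          have hyi₁ : y i₁ = 1 := by simpa [hPf] using hi₁
          have hyj₁ : y j₁ = -1 := by simpa [hNf] using hj₁
          have hgap2 := gap_of_max x y a h0 hnn hmax' i₁ j₁ hyi₁ hyj₁
          rw [← hw] at hgap2
          rw [hPm, hPmv, hNm, hNmv]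
          linarith
        refine ⟨a, -(Pm + Nm) / 2, fun j => ?_⟩
        rw [lin_eq x y a j, ← hw]
        rcases hy j with hj | hj
        · have hjP : j ∈ Pf := by simp [hPf, hj]
          have hle : Pm ≤ ipF w (phiF d (x j)) :=
            Finset.inf'_le (fun i => ipF w (phiF d (x i))) hjP
          rw [hj]
          unfold perceptronSign
          rw [if_pos (by linarith)]
        · have hjN : j ∈ Nf := by simp [hNf, hj]
          have hle : ipF w (phiF d (x j)) ≤ Nm :=
            Finset.le_sup' (fun i => ipF w (phiF d (x i))) hjN
          rw [hj]
          unfold perceptronSign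
          rw [if_neg (by linarith)]
      · -- all labels are 1
        refine ⟨0, 0, fun j => ?_⟩
        have hj : y j = 1 := (hy j).resolve_right (fun h => hN ⟨j, h⟩)
        simp [perceptronSign, hj]
    · -- all labels are -1
      refine ⟨0, -1, fun j => ?_⟩
      have hj : y j = -1 := by
        rcases hy j with h | h
        · exact absurd ⟨j, h⟩ hP
        · exact h
      simp [perceptronSign, hj]
end

section
/- Let x_1, …, x_m ∈ ℝ^n, let y = [y_1, …, y_m] with y_i ∈ {−1, 1}, set Y = diag(y_1, …, y_m), K = (⟨x_i, x_j⟩)_{i,j=1,…,m}, and let d be a positive integer. The constrained maximization problem max over a ∈ ℝ^m of ( ‖a‖_1 − (1/2) a^T Y K^∘d Y a ) subject to Σ_{i=1}^m y_i a_i = 0 and a_1, …, a_m ≥ 0 fails to attain its supremum if and only if there exists a ∈ ℝ^m with a ≥ 0 componentwise, a ≠ 0, Σ_{i=1}^m y_i a_i = 0, and K^∘d Y a = 0. -/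
/-!
On the feasible cone `C` the objective is `ℓ a - q a`, with `ℓ a = ∑ i, a i` linear and
`q a = ½ aᵀ Y K^∘d Y a` a positive semidefinite quadratic form (`K^∘d` is a Hadamard power of a
Gram matrix, hence positive semidefinite by Schur), and `q a = 0` iff `K^∘d Y a = 0`.
If some nonzero `a ∈ C` has `q a = 0`, the objective grows linearly along the ray through `a`.
Otherwise compactness of `C ∩ sphere 0 1` gives `q a ≥ ε ‖a‖²` on `C`, so the objective is
negative far out in `C` and attains its maximum by the extreme value theorem.
-/

open Filter Matrix Metric
open scoped ComplexOrder

namespace Matrix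

theorem PosSemidef.map_pow {ι 𝕜 : Type*} [Fintype ι] [RCLike 𝕜] {A : Matrix ι ι 𝕜}
    (hA : A.PosSemidef) (d : ℕ) : (A.map (· ^ d)).PosSemidef := by
  induction d with
  | zero => simpa [vecMulVec, map] using posSemidef_vecMulVec_self_star (1 : ι → 𝕜)
  | succ d ih =>
    have h : A.map (· ^ (d + 1)) = A.map (· ^ d) ⊙ A := by ext; simp [pow_succ]
    exact h ▸ ih.hadamard hA

theorem posSemidef_gram_map_pow {m n : Type*} [Fintype m] [Fintype n] (x : Matrix m n ℝ)
    (d : ℕ) : ((x * xᵀ).map (· ^ d)).PosSemidef :=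
  (posSemidef_self_mul_conjTranspose x).map_pow d

theorem IsSymm.dotProduct_mul_mul_mulVec {ι R : Type*} [Fintype ι] [CommSemiring R]
    {Y : Matrix ι ι R} (hY : Y.IsSymm) (A : Matrix ι ι R) (v : ι → R) :
    v ⬝ᵥ (Y * A * Y) *ᵥ v = (Y *ᵥ v) ⬝ᵥ A *ᵥ (Y *ᵥ v) := by
  rw [← mulVec_mulVec, ← mulVec_mulVec, dotProduct_mulVec, ← mulVec_transpose, hY.eq]

theorem PosSemidef.dotProduct_mul_mul_mulVec_nonneg {ι : Type*} [Fintype ι]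
    {P Y : Matrix ι ι ℝ} (hP : P.PosSemidef) (hY : Y.IsSymm) (v : ι → ℝ) :
    0 ≤ v ⬝ᵥ (Y * P * Y) *ᵥ v := by
  simpa [hY.dotProduct_mul_mul_mulVec] using hP.dotProduct_mulVec_nonneg (Y *ᵥ v)

theorem PosSemidef.dotProduct_mul_mul_mulVec_eq_zero_iff {ι : Type*} [Fintype ι]
    {P Y : Matrix ι ι ℝ} (hP : P.PosSemidef) (hY : Y.IsSymm) (v : ι → ℝ) :
    v ⬝ᵥ (Y * P * Y) *ᵥ v = 0 ↔ (P * Y) *ᵥ v = 0 := by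
  simpa [hY.dotProduct_mul_mul_mulVec, mulVec_mulVec] using hP.dotProduct_mulVec_zero_iff (Y *ᵥ v)

end Matrix

theorem not_exists_isMaxOn_sub_of_cone {E : Type*} [AddCommGroup E] [Module ℝ E] {C : Set E}
    {q : E → ℝ} (hCsmul : ∀ ⦃t : ℝ⦄, 0 ≤ t → ∀ ⦃a⦄, a ∈ C → t • a ∈ C)
    (ℓ : E →ₗ[ℝ] ℝ) (hq_smul : ∀ (t : ℝ) a, q (t • a) = t ^ 2 * q a) {a : E} (ha : a ∈ C)
    (hℓa : 0 < ℓ a) (hqa : q a = 0) : ¬ ∃ b ∈ C, IsMaxOn (fun a => ℓ a - q a) C b := by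
  rintro ⟨b, -, hb⟩
  obtain ⟨N, hN⟩ := exists_nat_gt ((ℓ b - q b) / ℓ a)
  have hNa : ℓ ((N : ℝ) • a) - q ((N : ℝ) • a) ≤ ℓ b - q b := hb (hCsmul N.cast_nonneg ha)
  rw [map_smul, hq_smul, hqa, smul_eq_mul, mul_zero, sub_zero] at hNa
  rw [div_lt_iff₀ hℓa] at hN
  linarith

section ConeQuadratic

variable {E : Type*} [NormedAddCommGroup E] [NormedSpace ℝ E] [FiniteDimensional ℝ E]
  {C : Set E} {q : E → ℝ}

theorem exists_pos_mul_norm_sq_le_of_isClosed_cone (hCc : IsClosed C)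
    (hCsmul : ∀ ⦃t : ℝ⦄, 0 ≤ t → ∀ ⦃a⦄, a ∈ C → t • a ∈ C) (hq : Continuous q)
    (hq_smul : ∀ (t : ℝ) a, q (t • a) = t ^ 2 * q a) (hq_pos : ∀ a ∈ C, a ≠ 0 → 0 < q a) :
    ∃ ε > 0, ∀ a ∈ C, ε * ‖a‖ ^ 2 ≤ q a := by
  obtain ⟨ε, hε, hεq⟩ := ((isCompact_sphere (0 : E) 1).inter_left hCc).exists_forall_le'
    hq.continuousOn (a := 0) fun u hu => hq_pos u hu.1 (ne_zero_of_mem_unit_sphere ⟨u, hu.2⟩)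
  refine ⟨ε, hε, fun a ha => ?_⟩
  rcases eq_or_ne a 0 with rfl | ha0
  · simpa using (hq_smul 0 0).ge
  have hnorm : 0 < ‖a‖ := norm_pos_iff.2 ha0
  have hunit : ‖a‖⁻¹ • a ∈ C ∩ sphere 0 1 :=
    ⟨hCsmul (inv_nonneg.2 hnorm.le) ha, by simp [norm_smul, hnorm.ne']⟩
  calc ε * ‖a‖ ^ 2 ≤ ‖a‖ ^ 2 * q (‖a‖⁻¹ • a) := by
        rw [mul_comm]; exact mul_le_mul_of_nonneg_left (hεq _ hunit) (sq_nonneg _)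
    _ = q a := by rw [← hq_smul, smul_smul, mul_inv_cancel₀ hnorm.ne', one_smul]

theorem exists_isMaxOn_sub_of_isClosed_cone (hCc : IsClosed C) (hC0 : (0 : E) ∈ C)
    (hCsmul : ∀ ⦃t : ℝ⦄, 0 ≤ t → ∀ ⦃a⦄, a ∈ C → t • a ∈ C) (ℓ : E →ₗ[ℝ] ℝ) (hq : Continuous q)
    (hq_smul : ∀ (t : ℝ) a, q (t • a) = t ^ 2 * q a) (hq_pos : ∀ a ∈ C, a ≠ 0 → 0 < q a) :
    ∃ b ∈ C, IsMaxOn (fun a => ℓ a - q a) C b := by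
  obtain ⟨ε, hε, hεq⟩ := exists_pos_mul_norm_sq_le_of_isClosed_cone hCc hCsmul hq hq_smul hq_pos
  let L := LinearMap.toContinuousLinearMap ℓ
  have hfar : ∀ᶠ a in cocompact E, ‖L‖ / ε ≤ ‖a‖ :=
    tendsto_norm_cocompact_atTop.eventually (eventually_ge_atTop _)
  refine (L.continuous.sub hq).continuousOn.exists_isMaxOn' hCc hC0 ?_
  filter_upwards [hfar.filter_mono inf_le_left, mem_inf_of_right (mem_principal_self C)]
    with a ha haC
  have hq0 : q 0 = 0 := by simpa using hq_smul 0 0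
  calc ℓ a - q a ≤ ‖L‖ * ‖a‖ - ε * ‖a‖ ^ 2 :=
        sub_le_sub ((le_abs_self _).trans (L.le_opNorm a)) (hεq a haC)
    _ ≤ 0 := by
      rw [div_le_iff₀ hε] at ha
      nlinarith [norm_nonneg a]
    _ = ℓ 0 - q 0 := by simp [hq0]

theorem exists_isMaxOn_sub_iff_of_isClosed_cone (hCc : IsClosed C) (hC0 : (0 : E) ∈ C)
    (hCsmul : ∀ ⦃t : ℝ⦄, 0 ≤ t → ∀ ⦃a⦄, a ∈ C → t • a ∈ C) (ℓ : E →ₗ[ℝ] ℝ)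
    (hℓ_pos : ∀ a ∈ C, a ≠ 0 → 0 < ℓ a) (hq : Continuous q)
    (hq_smul : ∀ (t : ℝ) a, q (t • a) = t ^ 2 * q a) (hq_nonneg : ∀ a ∈ C, 0 ≤ q a) :
    (∃ b ∈ C, IsMaxOn (fun a => ℓ a - q a) C b) ↔ ∀ a ∈ C, q a = 0 → a = 0 := by
  refine ⟨fun hmax a ha hqa => ?_, fun hker => ?_⟩
  · by_contra ha0
    exact not_exists_isMaxOn_sub_of_cone hCsmul ℓ hq_smul ha (hℓ_pos a ha ha0) hqa hmax
  · exact exists_isMaxOn_sub_of_isClosed_cone hCc hC0 hCsmul ℓ hq hq_smul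
      fun a ha ha0 => (hq_nonneg a ha).lt_of_ne' (mt (hker a ha) ha0)

end ConeQuadratic

section FeasibleCone

variable {ι : Type*} [Fintype ι]

def feasibleCone (y : ι → ℝ) : Set (ι → ℝ) := {a | (∑ i, y i * a i = 0) ∧ ∀ i, 0 ≤ a i}

theorem isClosed_feasibleCone (y : ι → ℝ) : IsClosed (feasibleCone y) :=
  (isClosed_eq (by fun_prop) continuous_const).inter (isClosed_Ici (a := 0))

theorem zero_mem_feasibleCone (y : ι → ℝ) : (0 : ι → ℝ) ∈ feasibleCone y := by
  simp [feasibleCone]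

theorem smul_mem_feasibleCone {y : ι → ℝ} {t : ℝ} (ht : 0 ≤ t) {a : ι → ℝ}
    (ha : a ∈ feasibleCone y) : t • a ∈ feasibleCone y := by
  refine ⟨?_, fun i => mul_nonneg ht (ha.2 i)⟩
  simp only [Pi.smul_apply, smul_eq_mul, mul_left_comm _ t, ← Finset.mul_sum, ha.1, mul_zero]

theorem sum_pos_of_mem_feasibleCone {y : ι → ℝ} {a : ι → ℝ} (ha : a ∈ feasibleCone y)
    (ha0 : a ≠ 0) : 0 < ∑ i, a i :=
  Fintype.sum_pos (lt_of_le_of_ne ha.2 (Ne.symm ha0))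

end FeasibleCone

theorem dual_problem_infeasible_iff_general (n m : ℕ)
    (x : Fin m → Fin n → ℝ) (y : Fin m → ℝ)
    (K : Matrix (Fin m) (Fin m) ℝ) (hK : ∀ i j, K i j = ∑ k, x i k * x j k)
    (Kd : Matrix (Fin m) (Fin m) ℝ) (d : ℕ)
    (hKd : ∀ i j, Kd i j = K i j ^ d)
    (Y : Matrix (Fin m) (Fin m) ℝ) (hY : Y = Matrix.diagonal y) :
    ¬ (∃ a : Fin m → ℝ,
        ((∑ i, y i * a i = 0) ∧ ∀ i, 0 ≤ a i) ∧
        ∀ a' : Fin m → ℝ, ((∑ i, y i * a' i = 0) ∧ ∀ i, 0 ≤ a' i) →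
          (∑ i, |a' i|) - (1 / 2) * dotProduct a' ((Y * Kd * Y).mulVec a') ≤
          (∑ i, |a i|) - (1 / 2) * dotProduct a ((Y * Kd * Y).mulVec a)) ↔
    (∃ a : Fin m → ℝ, (∀ i, 0 ≤ a i) ∧ a ≠ 0 ∧ (∑ i, y i * a i = 0) ∧
        (Kd * Y).mulVec a = 0) := by
  have hKd_eq : Kd = (of x * (of x)ᵀ).map (· ^ d) := by ext; simp [hKd, hK, mul_apply]
  have hKd_psd : Kd.PosSemidef := hKd_eq ▸ posSemidef_gram_map_pow (of x) d
  have hY_symm : Y.IsSymm := hY ▸ isSymm_diagonal y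
  set q : (Fin m → ℝ) → ℝ := fun a => 1 / 2 * (a ⬝ᵥ (Y * Kd * Y) *ᵥ a)
  have hq_smul : ∀ (t : ℝ) a, q (t • a) = t ^ 2 * q a := fun t a => by
    simp only [q, mulVec_smul, dotProduct_smul, smul_dotProduct, smul_eq_mul]; ring
  let ℓ : (Fin m → ℝ) →ₗ[ℝ] ℝ := ∑ i, LinearMap.proj i
  have hobj : ∀ a ∈ feasibleCone y,
      (∑ i, |a i|) - 1 / 2 * a ⬝ᵥ (Y * Kd * Y) *ᵥ a = ℓ a - q a := fun a ha => by
    simp [ℓ, q, abs_of_nonneg (ha.2 _)]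
  have hq_zero : ∀ a, q a = 0 ↔ (Kd * Y) *ᵥ a = 0 := fun a => by
    simpa [q] using hKd_psd.dotProduct_mul_mul_mulVec_eq_zero_iff hY_symm a
  calc _ ↔ ¬ ∃ b ∈ feasibleCone y, IsMaxOn (fun a => ℓ a - q a) (feasibleCone y) b :=
        not_congr <| exists_congr fun b => and_congr_right fun hb =>
          forall₂_congr fun a' ha' => by rw [hobj a' ha', hobj b hb]; rfl
    _ ↔ ¬ ∀ a ∈ feasibleCone y, q a = 0 → a = 0 := by
      refine not_congr (exists_isMaxOn_sub_iff_of_isClosed_cone (isClosed_feasibleCone y)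
        (zero_mem_feasibleCone y) (fun _ ht _ ha => smul_mem_feasibleCone ht ha) ℓ
        (fun a ha ha0 => by simpa [ℓ] using sum_pos_of_mem_feasibleCone ha ha0)
        (by fun_prop) hq_smul fun a _ => ?_)
      simpa [q] using hKd_psd.dotProduct_mul_mul_mulVec_nonneg hY_symm a
    _ ↔ _ := by
      simp only [not_forall, hq_zero, feasibleCone, Set.mem_ofPred_eq]
      exact exists_congr fun a => by tauto

/-- With data `x₁, …, x_m ∈ ℝ^n`, labels `y_i ∈ {−1,1}`, `Y = diag(y)`,
`K = (⟨x_i,x_j⟩)_{ij}` and `d ≥ 1`, the constrained maximization problem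
`max_a ( ‖a‖₁ − ½ aᵀ Y K^∘d Y a )` subject to `Σ_i y_i a_i = 0`, `a ≥ 0` fails to attain its
supremum if and only if there is `a ∈ ℝ^m` with `a ≥ 0`, `a ≠ 0`, `Σ_i y_i a_i = 0` and
`K^∘d Y a = 0`. -/
theorem dual_problem_infeasible_iff (n m : ℕ)
    (x : Fin m → Fin n → ℝ) (y : Fin m → ℝ) (hy : ∀ i, y i = 1 ∨ y i = -1)
    (K : Matrix (Fin m) (Fin m) ℝ) (hK : ∀ i j, K i j = ∑ k, x i k * x j k)
    (Kd : Matrix (Fin m) (Fin m) ℝ) (d : ℕ) (hd : 0 < d)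
    (hKd : ∀ i j, Kd i j = K i j ^ d)
    (Y : Matrix (Fin m) (Fin m) ℝ) (hY : Y = Matrix.diagonal y) :
    ¬ (∃ a : Fin m → ℝ,
        ((∑ i, y i * a i = 0) ∧ ∀ i, 0 ≤ a i) ∧
        ∀ a' : Fin m → ℝ, ((∑ i, y i * a' i = 0) ∧ ∀ i, 0 ≤ a' i) →
          (∑ i, |a' i|) - (1 / 2) * dotProduct a' ((Y * Kd * Y).mulVec a') ≤
          (∑ i, |a i|) - (1 / 2) * dotProduct a ((Y * Kd * Y).mulVec a)) ↔
    (∃ a : Fin m → ℝ, (∀ i, 0 ≤ a i) ∧ a ≠ 0 ∧ (∑ i, y i * a i = 0) ∧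
        (Kd * Y).mulVec a = 0) :=
  dual_problem_infeasible_iff_general n m x y K hK Kd d hKd Y hY
end
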